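/- arXiv:0709.2809 — 10 statements merged into one kernel-verified Lean document; each statement's English description precedes it below -/
import Mathlib

section
/- Let L ⊇ F_q be a field, σ the q-Frobenius on L extended coefficient-wise to L[t], and let K be a finite-dimensional L[t]-module (finite torsion module over L[t]) equipped with an L[t]-semilinear-induced map τ: σ*K → K (an L[t]-linear map from the Frobenius twist). Set K^ét := ⋂_{n≥1} image(τ^n). Then τ restricts to an isomorphism σ*(K^ét) → K^ét, and the induced map on the quotient K/K^ét is nilpotent. -/
/-! The spans `S n` of the images of the iterates `τ^[n+1]` form a decreasing chain of
`L[t]`-submodules of `K`, which is Artinian because it is finite-dimensional over `L`; so the chain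
stabilises, `S N = K^ét` for large `N`. Then `τ(K^ét)` spans `S (N+1) = K^ét`, and `τ^[N+1]` maps
all of `K` into `K^ét`. Since `τ` commutes with `t`, the `L[t]`-span of `τ(K^ét)` is already its
`L`-span, so `τ` sends a basis of `K^ét` to a spanning family of `K^ét` of the same size, i.e. to a
basis: this is the injectivity of `σ*(K^ét) → K^ét`. -/

open Polynomial Submodule Set Function

theorem Submodule.apply_mem_span_image_of_mem_span' {R R₂ M M₂ : Type*} [Semiring R] [Semiring R₂]
    [AddCommMonoid M] [AddCommMonoid M₂] [Module R M] [Module R₂ M₂] {σ : R →+* R₂}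
    (f : M →ₛₗ[σ] M₂) {s : Set M} {x : M} (h : x ∈ span R s) : f x ∈ span R₂ (f '' s) :=
  span_le (p := (span R₂ (f '' s)).comap f) |>.2 (fun _ hy ↦ subset_span (mem_image_of_mem f hy)) h

theorem Submodule.span_image_span {R R₂ M M₂ : Type*} [Semiring R] [Semiring R₂]
    [AddCommMonoid M] [AddCommMonoid M₂] [Module R M] [Module R₂ M₂] {σ : R →+* R₂}
    (f : M →ₛₗ[σ] M₂) (s : Set M) : span R₂ (f '' span R s) = span R₂ (f '' s) :=
  le_antisymm (span_le.2 <| image_subset_iff.2 fun _ ↦ apply_mem_span_image_of_mem_span' f)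
    (span_mono (image_mono subset_span))

theorem LinearIndepOn.semilinearMap_of_le_span_image {L M : Type*} [Field L] [AddCommGroup M]
    [Module L M] [FiniteDimensional L M] {φ : L →+* L} (g : M →ₛₗ[φ] M) {W : Submodule L M}
    (hW : W ≤ span L (g '' W)) {s : Set M} (hs : LinearIndepOn L id s) (hsW : s ⊆ W) :
    LinearIndepOn L g s := by
  classical
  set b := hs.extend hsW
  have hb : LinearIndepOn L id b := hs.linearIndepOn_extend hsW
  have hspan : span L b = W := by rw [hs.span_extend_eq_span, span_eq]
  have : Fintype b := (LinearIndependent.setFinite hb).fintype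
  have hgb : LinearIndepOn L g b := by
    rw [LinearIndepOn, linearIndependent_iff_card_le_finrank_span, ← image_eq_range]
    calc Fintype.card b = Module.finrank L (span L b) := by
          rw [finrank_span_set_eq_card hb, toFinset_card]
      _ ≤ Module.finrank L (span L (g '' b)) := Submodule.finrank_mono <| by
        rw [hspan]
        refine hW.trans (span_le.2 <| image_subset_iff.2 fun x hx ↦ ?_)
        exact apply_mem_span_image_of_mem_span' g (hspan.ge hx)
  exact hgb.mono (hs.subset_extend hsW)

namespace LinearMap

variable {R M : Type*} [Ring R] [AddCommGroup M] [Module R M] {σ : R →+* R} (f : M →ₛₗ[σ] M)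

def etalePart : Submodule R M := ⨅ n : ℕ, span R (Set.range (⇑f)^[n + 1])

theorem antitone_span_range_iterate : Antitone fun n ↦ span R (Set.range (⇑f)^[n + 1]) :=
  antitone_nat_of_succ_le fun n ↦ span_mono <| by
    rw [iterate_succ]
    exact range_comp_subset_range _ _

theorem span_image_span_range_iterate (n : ℕ) :
    span R (f '' span R (Set.range (⇑f)^[n + 1])) = span R (Set.range (⇑f)^[n + 2]) := by
  rw [span_image_span, ← Set.range_comp, ← iterate_succ']

theorem exists_span_range_iterate_eq_etalePart [IsArtinian R M] :
    ∃ N, ∀ n ≥ N, span R (Set.range (⇑f)^[n + 1]) = etalePart f := by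
  obtain ⟨N, hN⟩ := IsArtinian.monotone_stabilizes ⟨_, (antitone_span_range_iterate f).dual_right⟩
  have hstable (n : ℕ) (hn : N ≤ n) :
      span R (Set.range (⇑f)^[n + 1]) = span R (Set.range (⇑f)^[N + 1]) :=
    (hN n hn).symm
  refine ⟨N, fun n hn ↦ (hstable n hn).trans <| le_antisymm (le_iInf fun m ↦ ?_) (iInf_le _ N)⟩
  rcases le_total m N with hm | hm
  · exact antitone_span_range_iterate f hm
  · exact (hstable m hm).ge

theorem span_image_etalePart [IsArtinian R M] : span R (f '' etalePart f) = etalePart f := by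
  obtain ⟨N, hN⟩ := exists_span_range_iterate_eq_etalePart f
  rw [← hN N le_rfl, span_image_span_range_iterate, hN (N + 1) N.le_succ, hN N le_rfl]

theorem exists_iterate_mem_etalePart [IsArtinian R M] : ∃ n, ∀ x, (⇑f)^[n] x ∈ etalePart f := by
  obtain ⟨N, hN⟩ := exists_span_range_iterate_eq_etalePart f
  exact ⟨N + 1, fun x ↦ hN N le_rfl ▸ subset_span (Set.mem_range_self x)⟩

end LinearMap

section Polynomial

variable {L M : Type*} [CommRing L] [AddCommGroup M] [Module L[X] M] [Module L M]
  [IsScalarTower L L[X] M]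

theorem Polynomial.smul_mem_of_X_smul_mem {V : Submodule L M} (hV : ∀ x ∈ V, (X : L[X]) • x ∈ V)
    (p : L[X]) {x : M} (hx : x ∈ V) : p • x ∈ V := by
  induction p using Polynomial.induction_on generalizing x with
  | C a => rw [← algebraMap_eq, algebraMap_smul]; exact V.smul_mem a hx
  | add p q hp hq => rw [add_smul]; exact add_mem (hp hx) (hq hx)
  | monomial n a h => rw [pow_succ, ← mul_assoc, mul_smul]; exact h (hV x hx)

theorem Polynomial.restrictScalars_span_eq_span_of_X_smul_mem {T : Set M}
    (hT : ∀ x ∈ T, (X : L[X]) • x ∈ T) : (span L[X] T).restrictScalars L = span L T := by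
  refine le_antisymm (fun x hx ↦ ?_) (span_le_restrictScalars L L[X] T)
  have hX : ∀ y ∈ span L T, (X : L[X]) • y ∈ span L T := fun y hy ↦
    span_le (p := (span L T).comap ((DistribSMul.toLinearMap L[X] M X).restrictScalars L))
      |>.2 (fun z hz ↦ subset_span (hT z hz)) hy
  induction hx using span_induction with
  | mem y hy => exact subset_span hy
  | zero => exact zero_mem _
  | add y z _ _ hy hz => exact add_mem hy hz
  | smul p y _ hy => exact smul_mem_of_X_smul_mem hX p hy

end Polynomial

namespace LinearMap

variable {L M M₂ : Type*} [CommRing L] [AddCommGroup M] [Module L[X] M] [AddCommGroup M₂]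
  [Module L[X] M₂] {φ : L →+* L} (f : M →ₛₗ[mapRingHom φ] M₂)

theorem map_X_smul (x : M) : f ((X : L[X]) • x) = (X : L[X]) • f x := by
  rw [map_smulₛₗ, coe_mapRingHom, map_X]

variable [Module L M₂] [IsScalarTower L L[X] M₂]

theorem restrictScalars_span_image (p : Submodule L[X] M) :
    (span L[X] (f '' p)).restrictScalars L = span L (f '' p) := by
  refine restrictScalars_span_eq_span_of_X_smul_mem ?_
  rintro _ ⟨y, hy, rfl⟩
  exact ⟨X • y, p.smul_mem X hy, f.map_X_smul y⟩

variable [Module L M] [IsScalarTower L L[X] M]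

noncomputable def restrictScalarsPolynomial : M →ₛₗ[φ] M₂ where
  toFun := f
  map_add' := f.map_add
  map_smul' a x := by
    rw [← algebraMap_smul L[X] a x, map_smulₛₗ, algebraMap_eq, coe_mapRingHom, map_C,
      ← algebraMap_eq, algebraMap_smul]

@[simp]
theorem coe_restrictScalarsPolynomial : ⇑f.restrictScalarsPolynomial = f :=
  rfl

end LinearMap

theorem stmt1_general {L : Type} [Field L]
    (frob : L →+* L)
    {K : Type} [AddCommGroup K] [Module (Polynomial L) K]
    [Module L K] [IsScalarTower L (Polynomial L) K] [FiniteDimensional L K]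
    (τ : K → K)
    (hadd : ∀ x y, τ (x + y) = τ x + τ y)
    (hsl : ∀ (p : Polynomial L) (x : K), τ (p • x) = (p.map frob) • τ x) :
    (Submodule.span (Polynomial L)
        (τ '' ((⨅ n : ℕ, Submodule.span (Polynomial L) (Set.range τ^[n + 1])) : Set K))
      = ⨅ n : ℕ, Submodule.span (Polynomial L) (Set.range τ^[n + 1])) ∧
    (∀ (s : Finset K),
      (s : Set K) ⊆ (⨅ n : ℕ, Submodule.span (Polynomial L) (Set.range τ^[n + 1]) : Set K) →
      LinearIndependent L (fun x : s => (x : K)) →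
      LinearIndependent L (fun x : s => τ (x : K))) ∧
    (∃ n : ℕ, ∀ x : K,
      τ^[n] x ∈ (⨅ m : ℕ, Submodule.span (Polynomial L) (Set.range τ^[m + 1]))) := by
  let f : K →ₛₗ[mapRingHom frob] K := { toFun := τ, map_add' := hadd, map_smul' := hsl }
  have : IsArtinian L[X] K := isArtinian_of_tower L inferInstance
  have hcoe : (f.etalePart : Set K) = ⨅ n, (span L[X] (Set.range τ^[n + 1]) : Set K) :=
    coe_iInf _
  rw [← hcoe]
  have hsurj : span L[X] (f '' f.etalePart) = f.etalePart := f.span_image_etalePart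
  refine ⟨hsurj, fun s hsE hs ↦ ?_, f.exists_iterate_mem_etalePart⟩
  have hE :
      f.etalePart.restrictScalars L ≤ span L (f.restrictScalarsPolynomial '' f.etalePart) := by
    rw [LinearMap.coe_restrictScalarsPolynomial, ← f.restrictScalars_span_image, hsurj]
  exact LinearIndepOn.semilinearMap_of_le_span_image _ hE hs hsE

/-- étale/nilpotent filtration of a finite torsion `L[t]`-module `K`
with a Frobenius-semilinear map `τ` (i.e. an `L[t]`-linear map `σ*K → K`).
Setting `K^ét := ⋂_{n ≥ 1} im(τ^n)` (the `L[t]`-span of the function-image of the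
`n`-th twisted iterate), `τ` restricts to an isomorphism `σ*(K^ét) → K^ét`
(surjectivity: the span of `τ(K^ét)` is `K^ét`; injectivity of the map from the
twist: `τ` preserves `L`-linear independence of families in `K^ét`),
and the induced map on `K/K^ét` is nilpotent. -/
theorem stmt1 {q : ℕ} (hq : 1 < q) {L : Type} [Field L]
    (frob : L →+* L) (hfrob : ∀ x : L, frob x = x ^ q)
    {K : Type} [AddCommGroup K] [Module (Polynomial L) K]
    [Module L K] [IsScalarTower L (Polynomial L) K] [FiniteDimensional L K]
    (τ : K → K)
    (hadd : ∀ x y, τ (x + y) = τ x + τ y)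
    (hsl : ∀ (p : Polynomial L) (x : K), τ (p • x) = (p.map frob) • τ x) :
    (Submodule.span (Polynomial L)
        (τ '' ((⨅ n : ℕ, Submodule.span (Polynomial L) (Set.range τ^[n + 1])) : Set K))
      = ⨅ n : ℕ, Submodule.span (Polynomial L) (Set.range τ^[n + 1])) ∧
    (∀ (s : Finset K),
      (s : Set K) ⊆ (⨅ n : ℕ, Submodule.span (Polynomial L) (Set.range τ^[n + 1]) : Set K) →
      LinearIndependent L (fun x : s => (x : K)) →
      LinearIndependent L (fun x : s => τ (x : K))) ∧
    (∃ n : ℕ, ∀ x : K,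
      τ^[n] x ∈ (⨅ m : ℕ, Submodule.span (Polynomial L) (Set.range τ^[m + 1]))) :=
  stmt1_general frob τ hadd hsl
end

section
/- With the notation of the étale/nilpotent filtration: if the base field L is perfect, then the extension 0 → K^ét → K → K^nil → 0 splits canonically; specifically, the submodule ⋃_{n≥1} (σ*)^{-n}(ker τ^n) is a τ-stable complement of K^ét in K. -/
open Function Polynomial

section aux

variable {L : Type} [Field L] (frob : L →+* L)
  {K : Type} [AddCommGroup K] [Module (Polynomial L) K]
  (τ : K → K)

private lemma tz (hadd : ∀ x y, τ (x + y) = τ x + τ y) : τ 0 = 0 := by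
  have h := hadd 0 0
  rw [add_zero] at h
  exact (left_eq_add.mp h)

private lemma iter_add (hadd : ∀ x y, τ (x + y) = τ x + τ y) :
    ∀ (n : ℕ) (x y : K), τ^[n] (x + y) = τ^[n] x + τ^[n] y := by
  intro n
  induction n with
  | zero => simp
  | succ k ih =>
    intro x y
    simp only [Function.iterate_succ_apply]
    rw [hadd, ih]

private lemma iter_zero (hadd : ∀ x y, τ (x + y) = τ x + τ y) :
    ∀ n : ℕ, τ^[n] (0 : K) = 0 := by
  intro n
  induction n with
  | zero => rfl
  | succ k ih => rw [Function.iterate_succ_apply', ih, tz τ hadd]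

private lemma iter_sub (hadd : ∀ x y, τ (x + y) = τ x + τ y) :
    ∀ (n : ℕ) (x y : K), τ^[n] (x - y) = τ^[n] x - τ^[n] y := by
  intro n x y
  have h : τ^[n] (x - y) + τ^[n] y = τ^[n] x := by
    rw [← iter_add τ hadd, sub_add_cancel]
  exact eq_sub_of_add_eq h

private lemma iter_smul
    (hsl : ∀ (p : Polynomial L) (x : K), τ (p • x) = (p.map frob) • τ x) :
    ∀ (n : ℕ) (p : Polynomial L) (x : K),
      τ^[n] (p • x) = ((Polynomial.map frob)^[n] p) • τ^[n] x := by
  intro n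
  induction n with
  | zero => intro p x; rfl
  | succ k ih =>
    intro p x
    rw [Function.iterate_succ_apply, hsl, ih, Function.iterate_succ_apply,
      ← Function.iterate_succ_apply τ k x]

variable (hadd : ∀ x y, τ (x + y) = τ x + τ y)
  (hsl : ∀ (p : Polynomial L) (x : K), τ (p • x) = (p.map frob) • τ x)
  (hperf : Function.Surjective frob)

/-- the image submodule `im τ^[n]`. -/
private def SimS (n : ℕ) : Submodule (Polynomial L) K where
  carrier := Set.range τ^[n]
  add_mem' := by
    rintro a b ⟨x, rfl⟩ ⟨y, rfl⟩
    exact ⟨x + y, iter_add τ hadd n x y⟩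
  zero_mem' := ⟨0, iter_zero τ hadd n⟩
  smul_mem' := by
    rintro p a ⟨x, rfl⟩
    obtain ⟨p', hp'⟩ := ((Polynomial.map_surjective frob hperf).iterate n) p
    exact ⟨p' • x, by rw [iter_smul frob τ hsl, hp']⟩

/-- the kernel submodule `ker τ^[n]`. -/
private def SkerS (n : ℕ) : Submodule (Polynomial L) K where
  carrier := {x | τ^[n] x = 0}
  add_mem' := by
    intro a b ha hb
    simp only [Set.mem_setOf_eq] at *
    rw [iter_add τ hadd, ha, hb, add_zero]
  zero_mem' := iter_zero τ hadd n
  smul_mem' := by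
    intro p a ha
    simp only [Set.mem_setOf_eq] at *
    rw [iter_smul frob τ hsl, ha, smul_zero]

private lemma mem_SimS {n : ℕ} {x : K} :
    x ∈ SimS frob τ hadd hsl hperf n ↔ ∃ y, τ^[n] y = x := Iff.rfl

private lemma mem_SkerS {n : ℕ} {x : K} :
    x ∈ SkerS frob τ hadd hsl n ↔ τ^[n] x = 0 := Iff.rfl

end aux

private lemma nat_anti_exists {g : ℕ → ℕ} (h : ∀ n, g (n + 1) ≤ g n) :
    ∃ n, g n ≤ g (n + 1) := by
  by_contra hc
  push_neg at hc
  have key : ∀ n, g n + n ≤ g 0 := by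
    intro n
    induction n with
    | zero => simp
    | succ k ih => have := hc k; omega
  have := key (g 0 + 1); omega

private lemma nat_mono_exists {g : ℕ → ℕ} {B : ℕ} (h : ∀ n, g n ≤ g (n + 1))
    (hB : ∀ n, g n ≤ B) : ∃ n, g (n + 1) ≤ g n := by
  obtain ⟨n, hn⟩ := nat_anti_exists (g := fun n => B - g n) (fun n => by
    show B - g (n + 1) ≤ B - g n
    have := h n; have := hB n; have := hB (n + 1); omega)
  have hn' : B - g n ≤ B - g (n + 1) := hn
  clear hn
  exact ⟨n, by have := hB n; have := hB (n + 1); have := h n; omega⟩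

/-- over a perfect field `L` (the `q`-Frobenius is surjective), the
étale/nilpotent extension `0 → K^ét → K → K^nil → 0` splits canonically:
`N := ⋃_{n ≥ 1} (σ*)^{-n}(ker τ^n)` (whose underlying set is
`{x | τ^[n] x = 0 for some n ≥ 1}`) is a `τ`-stable `L[t]`-submodule which is a
complement of `K^ét = ⋂_{n ≥ 1} im(τ^n)` in `K`. -/
theorem stmt2 {q : ℕ} (hq : 1 < q) {L : Type} [Field L]
    (frob : L →+* L) (hfrob : ∀ x : L, frob x = x ^ q)
    (hperf : Function.Surjective frob)
    {K : Type} [AddCommGroup K] [Module (Polynomial L) K]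
    [Module L K] [IsScalarTower L (Polynomial L) K] [FiniteDimensional L K]
    (τ : K → K)
    (hadd : ∀ x y, τ (x + y) = τ x + τ y)
    (hsl : ∀ (p : Polynomial L) (x : K), τ (p • x) = (p.map frob) • τ x) :
    (∀ x : K, (∃ n : ℕ, τ^[n + 1] x = 0) → ∃ n : ℕ, τ^[n + 1] (τ x) = 0) ∧
    (∀ (p : Polynomial L) (x : K), (∃ n : ℕ, τ^[n + 1] x = 0) →
      ∃ n : ℕ, τ^[n + 1] (p • x) = 0) ∧
    (∀ x y : K, (∃ n : ℕ, τ^[n + 1] x = 0) → (∃ n : ℕ, τ^[n + 1] y = 0) →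
      ∃ n : ℕ, τ^[n + 1] (x + y) = 0) ∧
    (∀ x : K,
      x ∈ (⨅ m : ℕ, Submodule.span (Polynomial L) (Set.range τ^[m + 1])) →
      (∃ n : ℕ, τ^[n + 1] x = 0) → x = 0) ∧
    (∀ x : K, ∃ y z : K,
      y ∈ (⨅ m : ℕ, Submodule.span (Polynomial L) (Set.range τ^[m + 1])) ∧
      (∃ n : ℕ, τ^[n + 1] z = 0) ∧ x = y + z) := by
  classical
  set Sim : ℕ → Submodule (Polynomial L) K :=
    fun n => SimS frob τ hadd hsl hperf n with hSimdef
  set Sker : ℕ → Submodule (Polynomial L) K :=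
    fun n => SkerS frob τ hadd hsl n with hSkerdef
  have memSim : ∀ (n : ℕ) (x : K), x ∈ Sim n ↔ ∃ y, τ^[n] y = x :=
    fun n x => mem_SimS frob τ hadd hsl hperf
  have memSker : ∀ (n : ℕ) (x : K), x ∈ Sker n ↔ τ^[n] x = 0 :=
    fun n x => mem_SkerS frob τ hadd hsl
  -- monotonicity
  have hSim_le : ∀ a b : ℕ, a ≤ b → Sim b ≤ Sim a := by
    intro a b hab x hx
    obtain ⟨y, hy⟩ := (memSim b x).mp hx
    obtain ⟨c, rfl⟩ := Nat.exists_eq_add_of_le hab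
    exact (memSim a x).mpr ⟨τ^[c] y, by rw [← Function.iterate_add_apply]; exact hy⟩
  have hSker_le : ∀ a b : ℕ, a ≤ b → Sker a ≤ Sker b := by
    intro a b hab x hx
    obtain ⟨c, rfl⟩ := Nat.exists_eq_add_of_le hab
    refine (memSker _ x).mpr ?_
    rw [Nat.add_comm a c, Function.iterate_add_apply, (memSker a x).mp hx,
      iter_zero τ hadd]
  -- helper : nilpotency is stable under bigger exponents
  have hup : ∀ (a b : ℕ) (w : K), a ≤ b → τ^[a] w = 0 → τ^[b] w = 0 := by
    intro a b w hab h0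
    obtain ⟨c, rfl⟩ := Nat.exists_eq_add_of_le hab
    rw [Nat.add_comm a c, Function.iterate_add_apply, h0, iter_zero τ hadd]
  -- stabilization of the image chain
  have hRS_anti : ∀ n, Submodule.restrictScalars L (Sim (n + 1)) ≤
      Submodule.restrictScalars L (Sim n) :=
    fun n x hx => hSim_le n (n + 1) (Nat.le_succ n) hx
  obtain ⟨nI, hnI⟩ := nat_anti_exists
    (g := fun n => Module.finrank L (Submodule.restrictScalars L (Sim n)))
    (fun n => Submodule.finrank_mono (hRS_anti n))
  have hconsI : Sim (nI + 1) = Sim nI :=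
    Submodule.restrictScalars_injective L _ _
      (Submodule.eq_of_le_of_finrank_le (hRS_anti nI) hnI)
  have hstabI : ∀ m : ℕ, Sim (nI + m) = Sim nI := by
    intro m
    induction m with
    | zero => rfl
    | succ c ih =>
      apply le_antisymm
      · intro a ha
        obtain ⟨y, hy⟩ := (memSim _ a).mp ha
        refine ih ▸ ((memSim (nI + c) a).mpr ⟨τ y, ?_⟩)
        rw [← Function.iterate_succ_apply]; exact hy
      · intro a ha
        have ha1 : a ∈ Sim (nI + 1) := hconsI.symm ▸ ha
        obtain ⟨w, hw⟩ := (memSim _ a).mp ha1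
        have hb : (τ^[nI] w) ∈ Sim (nI + c) :=
          ih.symm ▸ ((memSim nI _).mpr ⟨w, rfl⟩)
        obtain ⟨u, hu⟩ := (memSim _ _).mp hb
        refine (memSim _ a).mpr ⟨u, ?_⟩
        rw [show nI + (c + 1) = (nI + c) + 1 from rfl,
          Function.iterate_succ_apply' τ (nI + c) u, hu,
          ← Function.iterate_succ_apply' τ nI w]
        exact hw
  -- stabilization of the kernel chain
  have hRS_mono : ∀ n, Submodule.restrictScalars L (Sker n) ≤
      Submodule.restrictScalars L (Sker (n + 1)) :=
    fun n x hx => hSker_le n (n + 1) (Nat.le_succ n) hx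
  obtain ⟨nK, hnK⟩ := nat_mono_exists
    (g := fun n => Module.finrank L (Submodule.restrictScalars L (Sker n)))
    (B := Module.finrank L K)
    (fun n => Submodule.finrank_mono (hRS_mono n))
    (fun n => Submodule.finrank_le _)
  have hconsK : Sker (nK + 1) = Sker nK :=
    (Submodule.restrictScalars_injective L _ _
      (Submodule.eq_of_le_of_finrank_le (hRS_mono nK) hnK)).symm
  have hstabK : ∀ m : ℕ, Sker (nK + m) = Sker nK := by
    intro m
    induction m with
    | zero => rfl
    | succ c ih =>
      apply le_antisymm
      · intro a ha
        have h1 : τ^[nK + c] (τ a) = 0 := by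
          rw [← Function.iterate_succ_apply]
          exact (memSker _ a).mp ha
        have h2 : τ a ∈ Sker nK := ih ▸ ((memSker (nK + c) _).mpr h1)
        refine hconsK ▸ ((memSker (nK + 1) a).mpr ?_)
        rw [Function.iterate_succ_apply]
        exact (memSker nK _).mp h2
      · exact hSker_le nK (nK + (c + 1)) (Nat.le_add_right _ _)
  -- span of the range is the image submodule
  have hspan : ∀ m : ℕ,
      Submodule.span (Polynomial L) (Set.range τ^[m + 1]) = Sim (m + 1) := by
    intro m
    apply le_antisymm
    · exact Submodule.span_le.mpr (fun x hx => (memSim (m + 1) x).mpr hx)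
    · intro x hx
      exact Submodule.subset_span ((memSim (m + 1) x).mp hx)
  refine ⟨?_, ?_, ?_, ?_, ?_⟩
  · rintro x ⟨n, hn⟩
    refine ⟨n, ?_⟩
    rw [← Function.iterate_succ_apply, Function.iterate_succ_apply', hn,
      tz τ hadd]
  · rintro p x ⟨n, hn⟩
    exact ⟨n, by rw [iter_smul frob τ hsl, hn, smul_zero]⟩
  · rintro x y ⟨n, hn⟩ ⟨m, hm⟩
    refine ⟨max n m, ?_⟩
    rw [iter_add τ hadd, hup (n + 1) (max n m + 1) x (by omega) hn,
      hup (m + 1) (max n m + 1) y (by omega) hm, add_zero]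
  · rintro x hx ⟨k, hk⟩
    have hxm : ∀ m : ℕ, x ∈ Sim (m + 1) := by
      intro m
      have h := (Submodule.mem_iInf _).mp hx m
      rwa [hspan m] at h
    obtain ⟨y, hy⟩ := (memSim (nK + 1) x).mp (hxm nK)
    have hky : τ^[(k + 1) + (nK + 1)] y = 0 := by
      rw [Function.iterate_add_apply, hy, hk]
    have h1 : y ∈ Sker (nK + (k + 2)) := by
      refine (memSker _ y).mpr ?_
      rw [show nK + (k + 2) = (k + 1) + (nK + 1) by omega]
      exact hky
    rw [hstabK (k + 2)] at h1
    have h2 : τ^[nK + 1] y = 0 := by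
      rw [Function.iterate_succ_apply', (memSker nK y).mp h1, tz τ hadd]
    rw [← hy, h2]
  · intro x
    have hx1 : τ^[nI + 1] x ∈ Sim (nI + 1) := (memSim _ _).mpr ⟨x, rfl⟩
    have hx2 : τ^[nI + 1] x ∈ Sim (nI + (nI + 2)) := by
      rw [hstabI (nI + 2), ← hstabI 1]
      exact hx1
    obtain ⟨w, hw⟩ := (memSim _ _).mp hx2
    have hw' : τ^[nI + 1] (τ^[nI + 1] w) = τ^[nI + 1] x := by
      rw [← Function.iterate_add_apply,
        show (nI + 1) + (nI + 1) = nI + (nI + 2) by omega]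
      exact hw
    refine ⟨τ^[nI + 1] w, x - τ^[nI + 1] w, ?_, ⟨nI, ?_⟩, ?_⟩
    · refine (Submodule.mem_iInf _).mpr ?_
      intro m
      have hy1 : τ^[nI + 1] w ∈ Sim (nI + 1) := (memSim _ _).mpr ⟨w, rfl⟩
      have hy2 : τ^[nI + 1] w ∈ Sim (m + 1) := by
        rcases le_or_gt (m + 1) (nI + 1) with h | h
        · exact hSim_le (m + 1) (nI + 1) h hy1
        · have : Sim (m + 1) = Sim nI := by
            have := hstabI (m + 1 - nI)
            rwa [show nI + (m + 1 - nI) = m + 1 by omega] at this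
          rw [this, ← hstabI 1]
          exact hy1
      exact Submodule.subset_span ((memSim (m + 1) _).mp hy2)
    · rw [iter_sub τ hadd, hw', sub_self]
    · rw [add_sub_cancel]
end

section
/- Let L ⊇ F_q be a field with q-Frobenius σ acting on L[t], and let (M, τ) and (M', τ') be pairs where M, M' are finite free L[t]-modules and τ: σ*M → M, τ': σ*M' → M' are injective L[t]-linear maps with det(τ) = b·(t−θ)^e and det(τ') = b'·(t−θ)^e for the same exponent e, units b, b' ∈ L^×, and θ ∈ L. If f: M → M' is an injective L[t]-linear map satisfying f ∘ τ = τ' ∘ σ*(f), then there exists a nonzero a ∈ F_q[t] annihilating the cokernel of f. -/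
/-- Let `(M,τ)`, `(M',τ')` be finite free `L[t]`-modules (realized in
coordinates, so that `τ`, `τ'` and an injective compatible map `f` are given by
matrices `T`, `T'`, `H` over `L[t]` with `T'·σ(H) = H·T`, where `σ` is the
coefficientwise `q`-Frobenius).  If `det T = b·(t-θ)^e` and `det T' = b'·(t-θ)^e`
with `b, b' ∈ L^×`, and `f` is injective (`det H ≠ 0`), then there is a nonzero
`a ∈ F_q[t]` (i.e. with all coefficients fixed by `x ↦ x^q`) annihilating the
cokernel of `f`. -/
theorem stmt3 {q : ℕ} (hq : 1 < q) {L : Type} [Field L]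
    (frob : L →+* L) (hfrob : ∀ x : L, frob x = x ^ q)
    {m : ℕ} (T T' H : Matrix (Fin m) (Fin m) (Polynomial L))
    (θ : L) (e : ℕ) (b b' : L) (hb : b ≠ 0) (hb' : b' ≠ 0)
    (hT : T.det = Polynomial.C b * (Polynomial.X - Polynomial.C θ) ^ e)
    (hT' : T'.det = Polynomial.C b' * (Polynomial.X - Polynomial.C θ) ^ e)
    (hH : H.det ≠ 0)
    (hcompat : T' * H.map (Polynomial.map frob) = H * T) :
    ∃ a : Polynomial L, a ≠ 0 ∧ (∀ n : ℕ, (a.coeff n) ^ q = a.coeff n) ∧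
      ∀ v : Fin m → Polynomial L, ∃ w : Fin m → Polynomial L,
        H.mulVec w = a • v := by
  classical
  set h := H.det with hh
  -- determinant of the compatibility relation
  have hdet0 : T'.det * (H.map (Polynomial.map frob)).det = h * T.det := by
    have := congrArg Matrix.det hcompat
    rwa [Matrix.det_mul, Matrix.det_mul] at this
  have hmapdet : (H.map (Polynomial.map frob)).det = h.map frob := by
    have := RingHom.map_det (Polynomial.mapRingHom frob) H
    simpa using this.symm
  rw [hmapdet, hT, hT'] at hdet0
  have hpow : (Polynomial.X - Polynomial.C θ : Polynomial L) ^ e ≠ 0 := by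
    apply pow_ne_zero
    exact Polynomial.X_sub_C_ne_zero θ
  have key : Polynomial.C b' * h.map frob = Polynomial.C b * h := by
    apply mul_right_cancel₀ hpow
    calc Polynomial.C b' * h.map frob * (Polynomial.X - Polynomial.C θ) ^ e
        = Polynomial.C b' * (Polynomial.X - Polynomial.C θ) ^ e * h.map frob := by ring
      _ = h * (Polynomial.C b * (Polynomial.X - Polynomial.C θ) ^ e) := hdet0
      _ = Polynomial.C b * h * (Polynomial.X - Polynomial.C θ) ^ e := by ring
  -- coefficientwise relation
  have coeffrel : ∀ k : ℕ, b' * (h.coeff k) ^ q = b * h.coeff k := by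
    intro k
    have := congrArg (fun p => Polynomial.coeff p k) key
    simpa [Polynomial.coeff_C_mul, Polynomial.coeff_map, hfrob] using this
  set n := h.natDegree with hn
  set an := h.coeff n with han
  have han0 : an ≠ 0 := Polynomial.leadingCoeff_ne_zero.mpr hH
  -- b = b' * an ^ (q-1)
  have hq1 : q - 1 + 1 = q := by omega
  have hanq : an ^ q = an ^ (q - 1) * an := by rw [← pow_succ, hq1]
  have hbrel : b = b' * an ^ (q - 1) := by
    have h1 : b' * an ^ q = b * an := coeffrel n
    rw [hanq] at h1
    apply mul_right_cancel₀ han0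
    linear_combination -h1
  refine ⟨Polynomial.C an⁻¹ * h, ?_, ?_, ?_⟩
  · exact mul_ne_zero (by simp [han0]) hH
  · intro k
    have h1 : b' * (h.coeff k) ^ q = b' * an ^ (q - 1) * h.coeff k := by
      rw [← hbrel]; exact coeffrel k
    have h2 : (h.coeff k) ^ q = an ^ (q - 1) * h.coeff k := by
      have := mul_left_cancel₀ hb' (by linear_combination h1 :
        b' * ((h.coeff k) ^ q) = b' * (an ^ (q - 1) * h.coeff k))
      exact this
    have hcoeff : (Polynomial.C an⁻¹ * h).coeff k = an⁻¹ * h.coeff k := by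
      simp [Polynomial.coeff_C_mul]
    have h3 : (an⁻¹) ^ q * an ^ (q - 1) = an⁻¹ := by
      rw [inv_pow, hanq, mul_inv, mul_comm (an ^ (q - 1))⁻¹ an⁻¹, mul_assoc,
        inv_mul_cancel₀ (pow_ne_zero _ han0), mul_one]
    rw [hcoeff, mul_pow, h2, ← mul_assoc, h3]
  · intro v
    refine ⟨Polynomial.C an⁻¹ • (H.adjugate.mulVec v), ?_⟩
    rw [Matrix.mulVec_smul]
    rw [Matrix.mulVec_mulVec, Matrix.mul_adjugate, ← hh,
      Matrix.smul_mulVec, Matrix.one_mulVec]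
    rw [smul_smul]
end

section
/- Let A be an integral domain, L ⊇ F_q a field, and f: M → M' an injective homomorphism of finite modules over A ⊗_{F_q} L whose cokernel is annihilated by a nonzero element a ∈ A. Then there exists a unique homomorphism f^∨: M' → M with f ∘ f^∨ = a·id_{M'} and f^∨ ∘ f = a·id_M; moreover if f commutes with semilinear endomorphisms τ, τ' (i.e. f∘τ = τ'∘σ*f), then f^∨ also satisfies f^∨ ∘ τ' = τ ∘ σ*(f^∨). -/
/-- existence and uniqueness of the dual isogeny.  Here `R` plays the
role of `A_L = A ⊗_{F_q} L`, `σ : R →+* R` the Frobenius endomorphism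
`a ⊗ b ↦ a ⊗ b^q` (which fixes the element `a` coming from `A`), `τ, τ'` are the
`σ`-semilinear structure maps (i.e. `A_L`-linear maps from the Frobenius twists),
`f` is an injective morphism whose cokernel is annihilated by `a`.  Then there is
a unique `R`-linear `f^∨ : M' → M` with `f ∘ f^∨ = a·id`, `f^∨ ∘ f = a·id`, and
`f^∨` commutes with the semilinear structure maps. -/
theorem stmt4 {R : Type} [CommRing R] {M M' : Type}
    [AddCommGroup M] [Module R M] [AddCommGroup M'] [Module R M']
    (σ : R →+* R) (τ : M → M) (τ' : M' → M')
    (hτadd : ∀ x y, τ (x + y) = τ x + τ y)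
    (hτsl : ∀ (c : R) (x : M), τ (c • x) = σ c • τ x)
    (hτ'add : ∀ x y, τ' (x + y) = τ' x + τ' y)
    (hτ'sl : ∀ (c : R) (y : M'), τ' (c • y) = σ c • τ' y)
    (f : M →ₗ[R] M') (hfinj : Function.Injective f)
    (a : R) (ha : a ≠ 0) (hσa : σ a = a)
    (hann : ∀ y : M', a • y ∈ LinearMap.range f)
    (hcompat : ∀ x : M, f (τ x) = τ' (f x)) :
    ∃! g : M' →ₗ[R] M,
      (∀ y : M', f (g y) = a • y) ∧ (∀ x : M, g (f x) = a • x) ∧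
      (∀ y : M', g (τ' y) = τ (g y)) := by
  choose g0 hg0 using hann
  have key : ∀ y, f (g0 y) = a • y := hg0
  have hgadd : ∀ y z, g0 (y + z) = g0 y + g0 z := by
    intro y z
    apply hfinj
    simp [key, smul_add]
  have hgsmul : ∀ (c : R) (y : M'), g0 (c • y) = c • g0 y := by
    intro c y
    apply hfinj
    rw [key, map_smul, key, smul_comm]
  refine ⟨⟨⟨g0, hgadd⟩, hgsmul⟩, ⟨?_, ?_, ?_⟩, ?_⟩
  · intro y; exact key y
  · intro x
    apply hfinj
    show f (g0 (f x)) = _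
    rw [key, map_smul]
  · intro y
    apply hfinj
    show f (g0 (τ' y)) = f (τ (g0 y))
    rw [key, hcompat, key, hτ'sl, hσa]
  · rintro g' ⟨h1, _, _⟩
    ext y
    apply hfinj
    show f (g' y) = f (g0 y)
    rw [h1, key]
end

section
/- Every isogeny f: (M,τ) → (M',τ') of A-motives over a perfect field L factors as a separable isogeny M → M'' followed by a purely inseparable isogeny M'' → M', where an isogeny is injective with finite torsion cokernel, it is separable if the induced τ on its cokernel is an isomorphism, and purely inseparable if the induced τ on its cokernel is nilpotent. -/
set_option synthInstance.maxHeartbeats 1000000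
set_option maxHeartbeats 1000000


open Polynomial

/-- every isogeny `f : (M,τ) → (M',τ')` of `A`-motives
(`A = F_q[t]`) over a perfect field `L` factors as a separable isogeny
`M → M''` followed by a purely inseparable isogeny `M'' → M'`.  `M''` is
realized as a `τ'`-stable submodule of `M'` containing the image of `f`, with
torsion quotients on both sides; the induced `τ` on `M''/f(M)` is an
isomorphism (separability) and the induced `τ'` on `M'/M''` is nilpotent
(pure inseparability). -/
theorem stmt6 {q : ℕ} (hq : 1 < q) {L : Type} [Field L]
    (frob : L →+* L) (hfrob : ∀ x : L, frob x = x ^ q)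
    (hperf : Function.Surjective frob)
    {M M' : Type} [AddCommGroup M] [Module (Polynomial L) M]
    [AddCommGroup M'] [Module (Polynomial L) M']
    [Module.Finite (Polynomial L) M] [Module.Projective (Polynomial L) M]
    [Module.Finite (Polynomial L) M'] [Module.Projective (Polynomial L) M']
    (τ : M → M) (τ' : M' → M')
    (hτadd : ∀ x y, τ (x + y) = τ x + τ y)
    (hτsl : ∀ (p : Polynomial L) (x : M), τ (p • x) = (p.map frob) • τ x)
    (hτinj : Function.Injective τ)
    (hτ'add : ∀ x y, τ' (x + y) = τ' x + τ' y)
    (hτ'sl : ∀ (p : Polynomial L) (y : M'), τ' (p • y) = (p.map frob) • τ' y)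
    (hτ'inj : Function.Injective τ')
    (f : M →ₗ[Polynomial L] M') (hfinj : Function.Injective f)
    (hcompat : ∀ x : M, f (τ x) = τ' (f x))
    (htors : ∃ a : Polynomial L, a ≠ 0 ∧ ∀ y : M', a • y ∈ LinearMap.range f) :
    ∃ P : Submodule (Polynomial L) M',
      LinearMap.range f ≤ P ∧
      (∀ y ∈ P, τ' y ∈ P) ∧
      (∃ a : Polynomial L, a ≠ 0 ∧ ∀ y ∈ P, a • y ∈ LinearMap.range f) ∧
      (∃ a : Polynomial L, a ≠ 0 ∧ ∀ y : M', a • y ∈ P) ∧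
      -- separability of `M → M''`: the induced `τ` on `M''/f(M)` is bijective
      (∀ z ∈ P, τ' z ∈ LinearMap.range f → z ∈ LinearMap.range f) ∧
      (∀ y ∈ P, ∃ z ∈ P, y - τ' z ∈ LinearMap.range f) ∧
      -- pure inseparability of `M'' → M'`: the induced `τ'` on `M'/M''` is nilpotent
      (∃ n : ℕ, ∀ y : M', τ'^[n] y ∈ P) := by
  classical
  obtain ⟨a, ha0, ha⟩ := htors
  set rf := LinearMap.range f with hrfdef
  -- basic structure of τ'
  let T : M' →+ M' := AddMonoidHom.mk' τ' hτ'add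
  have hτ'0 : τ' 0 = 0 := map_zero T
  have hτ'sub : ∀ x y : M', τ' (x - y) = τ' x - τ' y := fun x y => map_sub T x y
  have it0 : ∀ n, τ'^[n] (0 : M') = 0 := fun n => Function.iterate_fixed hτ'0 n
  have itadd : ∀ n (x y : M'), τ'^[n] (x + y) = τ'^[n] x + τ'^[n] y := by
    intro n
    induction n with
    | zero => intro x y; simp
    | succ n ih =>
      intro x y
      rw [Function.iterate_succ_apply', Function.iterate_succ_apply',
        Function.iterate_succ_apply', ih, hτ'add]
  have itsl : ∀ n (p : Polynomial L) (y : M'),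
      τ'^[n] (p • y) = ((mapRingHom frob)^[n] p) • τ'^[n] y := by
    intro n
    induction n with
    | zero => intro p y; simp
    | succ n ih =>
      intro p y
      rw [Function.iterate_succ_apply', ih, hτ'sl, Function.iterate_succ_apply',
        Function.iterate_succ_apply', coe_mapRingHom]
  have hFsurj : ∀ n, Function.Surjective ((mapRingHom frob)^[n] : Polynomial L → Polynomial L) := by
    intro n
    apply Function.Surjective.iterate
    intro p
    obtain ⟨p', hp'⟩ := Polynomial.map_surjective frob hperf p
    exact ⟨p', by simpa [coe_mapRingHom] using hp'⟩
  have hrfτ : ∀ y ∈ rf, τ' y ∈ rf := by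
    rintro _ ⟨x, rfl⟩
    exact ⟨τ x, hcompat x⟩
  -- the descending chain of "images" and ascending chain of "kernels"
  let Q : ℕ → Submodule (Polynomial L) M' := fun n =>
    { carrier := {y | ∃ z, y - τ'^[n] z ∈ rf}
      add_mem' := by
        rintro y₁ y₂ ⟨z₁, hz₁⟩ ⟨z₂, hz₂⟩
        refine ⟨z₁ + z₂, ?_⟩
        rw [itadd]
        have h : y₁ + y₂ - (τ'^[n] z₁ + τ'^[n] z₂)
            = (y₁ - τ'^[n] z₁) + (y₂ - τ'^[n] z₂) := by abel
        rw [h]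
        exact rf.add_mem hz₁ hz₂
      zero_mem' := ⟨0, by rw [it0, sub_zero]; exact rf.zero_mem⟩
      smul_mem' := by
        rintro c y ⟨z, hz⟩
        obtain ⟨p, rfl⟩ := hFsurj n c
        refine ⟨p • z, ?_⟩
        rw [itsl, ← smul_sub]
        exact rf.smul_mem _ hz }
  have hQmem : ∀ n (y : M'), y ∈ Q n ↔ ∃ z, y - τ'^[n] z ∈ rf := fun n y => Iff.rfl
  let Kk : ℕ → Submodule (Polynomial L) M' := fun n =>
    { carrier := {y | τ'^[n] y ∈ rf}
      add_mem' := by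
        intro y₁ y₂ h₁ h₂
        show τ'^[n] (y₁ + y₂) ∈ rf
        rw [itadd]
        exact rf.add_mem h₁ h₂
      zero_mem' := by
        show τ'^[n] (0 : M') ∈ rf
        rw [it0]; exact rf.zero_mem
      smul_mem' := by
        intro c y h
        show τ'^[n] (c • y) ∈ rf
        rw [itsl]
        exact rf.smul_mem _ h }
  have hKmem : ∀ n (y : M'), y ∈ Kk n ↔ τ'^[n] y ∈ rf := fun n y => Iff.rfl
  have hrfle : ∀ n, rf ≤ Q n := fun n y hy =>
    (hQmem n y).mpr ⟨0, by rw [it0, sub_zero]; exact hy⟩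
  have hQanti : ∀ n, Q (n + 1) ≤ Q n := by
    intro n y hy
    obtain ⟨z, hz⟩ := (hQmem (n + 1) y).mp hy
    refine (hQmem n y).mpr ⟨τ' z, ?_⟩
    rw [← Function.iterate_succ_apply]
    exact hz
  have hKmono : Monotone Kk := by
    apply monotone_nat_of_le_succ
    intro n y hy
    refine (hKmem (n + 1) y).mpr ?_
    rw [Function.iterate_succ_apply']
    exact hrfτ _ ((hKmem n y).mp hy)
  -- kernel chain stabilizes by noetherianity
  obtain ⟨n₀, hn₀⟩ := monotone_stabilizes_iff_noetherian.mpr inferInstance ⟨Kk, hKmono⟩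
  -- image chain stabilizes by artinianity of the torsion quotient
  have haK : Module.IsTorsionBy (Polynomial L) (M' ⧸ rf) a := by
    intro x
    obtain ⟨y, rfl⟩ := Submodule.Quotient.mk_surjective rf x
    rw [← Submodule.Quotient.mk_smul, Submodule.Quotient.mk_eq_zero]
    exact ha y
  have hTset : Module.IsTorsionBySet (Polynomial L) (M' ⧸ rf)
      ((Ideal.span {a} : Ideal (Polynomial L)) : Set (Polynomial L)) :=
    (Module.isTorsionBySet_span_singleton_iff a).mpr haK
  letI : Module ((Polynomial L) ⧸ (Ideal.span {a} : Ideal (Polynomial L))) (M' ⧸ rf) :=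
    hTset.module
  haveI : IsScalarTower (Polynomial L)
      ((Polynomial L) ⧸ (Ideal.span {a} : Ideal (Polynomial L))) (M' ⧸ rf) :=
    hTset.isScalarTower
  haveI : Module.Finite ((Polynomial L) ⧸ (Ideal.span {a} : Ideal (Polynomial L))) (M' ⧸ rf) :=
    Module.Finite.of_restrictScalars_finite (Polynomial L) _ _
  haveI : IsArtinianRing ((Polynomial L) ⧸ (Ideal.span {a} : Ideal (Polynomial L))) := by
    haveI : Module.Finite L (AdjoinRoot a) := (AdjoinRoot.powerBasis ha0).finite
    exact IsArtinianRing.of_finite L (AdjoinRoot a)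
  haveI : IsArtinian ((Polynomial L) ⧸ (Ideal.span {a} : Ideal (Polynomial L))) (M' ⧸ rf) :=
    isArtinian_of_fg_of_artinian'
  let Qt : ℕ → Submodule ((Polynomial L) ⧸ (Ideal.span {a} : Ideal (Polynomial L))) (M' ⧸ rf) :=
    fun n =>
    { carrier := rf.mkQ '' (Q n)
      add_mem' := by
        rintro _ _ ⟨y₁, h₁, rfl⟩ ⟨y₂, h₂, rfl⟩
        exact ⟨y₁ + y₂, (Q n).add_mem h₁ h₂, map_add _ _ _⟩
      zero_mem' := ⟨0, (Q n).zero_mem, map_zero _⟩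
      smul_mem' := by
        rintro c _ ⟨y, hy, rfl⟩
        obtain ⟨r, rfl⟩ := Ideal.Quotient.mk_surjective c
        refine ⟨r • y, (Q n).smul_mem r hy, ?_⟩
        rw [map_smul, hTset.mk_smul] }
  have hQtanti : Antitone Qt := by
    apply antitone_nat_of_succ_le
    rintro n _ ⟨y, hy, rfl⟩
    exact ⟨y, hQanti n hy, rfl⟩
  obtain ⟨n₁, hn₁⟩ := IsArtinian.monotone_stabilizes
    (⟨fun n => OrderDual.toDual (Qt n), fun {i j} (hij : i ≤ j) => hQtanti hij⟩ :
      ℕ →o (Submodule ((Polynomial L) ⧸ (Ideal.span {a} : Ideal (Polynomial L))) (M' ⧸ rf))ᵒᵈ)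
  set N := max n₀ n₁ with hN
  have hKstab : Kk N = Kk (N + 1) := by
    have h1 := hn₀ N (le_max_left _ _)
    have h2 := hn₀ (N + 1) (le_trans (le_max_left _ _) (Nat.le_succ _))
    exact h1.symm.trans h2
  have hQt : Qt N = Qt (N + 1) := by
    have h1 := hn₁ N (le_max_right _ _)
    have h2 := hn₁ (N + 1) (le_trans (le_max_right _ _) (Nat.le_succ _))
    exact OrderDual.toDual.injective (h1.symm.trans h2)
  have hQstab : Q N = Q (N + 1) := by
    refine le_antisymm ?_ (hQanti N)
    intro y hy
    have hmem : rf.mkQ y ∈ Qt (N + 1) := by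
      rw [← hQt]
      exact ⟨y, hy, rfl⟩
    obtain ⟨y', hy', hyy⟩ := hmem
    have hsub : y - y' ∈ rf := by
      have : y' - y ∈ rf := (Submodule.Quotient.eq rf).mp hyy
      simpa using rf.neg_mem this
    have : y' + (y - y') ∈ Q (N + 1) := (Q (N + 1)).add_mem hy' (hrfle _ hsub)
    simpa using this
  refine ⟨Q N, hrfle N, ?_, ⟨a, ha0, fun y _ => ha y⟩, ⟨a, ha0, fun y => hrfle N (ha y)⟩,
    ?_, ?_, ⟨N, fun y => (hQmem N _).mpr ⟨y, by rw [sub_self]; exact rf.zero_mem⟩⟩⟩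
  · -- τ'-stability
    intro y hy
    obtain ⟨z, hz⟩ := (hQmem N y).mp hy
    refine hQanti N ((hQmem (N + 1) (τ' y)).mpr ⟨z, ?_⟩)
    rw [Function.iterate_succ_apply', ← hτ'sub]
    exact hrfτ _ hz
  · -- injectivity of the induced τ on Q N / rf
    intro z hzQN hz
    obtain ⟨w, hw⟩ := (hQmem N z).mp hzQN
    have h1 : τ' (z - τ'^[N] w) ∈ rf := hrfτ _ hw
    have h2 : τ'^[N + 1] w ∈ rf := by
      have heq : τ'^[N + 1] w = τ' z - τ' (z - τ'^[N] w) := by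
        rw [hτ'sub, Function.iterate_succ_apply']
        abel
      rw [heq]
      exact rf.sub_mem hz h1
    have h3 : w ∈ Kk N := by
      rw [hKstab]
      exact (hKmem (N + 1) w).mpr h2
    have h4 : τ'^[N] w ∈ rf := (hKmem N w).mp h3
    have h5 : (z - τ'^[N] w) + τ'^[N] w ∈ rf := rf.add_mem hw h4
    simpa using h5
  · -- surjectivity of the induced τ on Q N / rf
    intro y hy
    rw [hQstab] at hy
    obtain ⟨z, hz⟩ := (hQmem (N + 1) y).mp hy
    refine ⟨τ'^[N] z, (hQmem N _).mpr ⟨z, by rw [sub_self]; exact rf.zero_mem⟩, ?_⟩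
    rw [← Function.iterate_succ_apply' τ' N z]
    exact hz
end

section
/- Let F, F' be collections of vector bundles on a smooth projective curve over a field with injective module maps as in the definition of abelian τ-sheaves, and suppose f: F → F' is a nonzero morphism of abelian τ-sheaves (commuting with all Φ_i and τ_i). Then weight(F) = weight(F'), i.e. d/r = d'/r' where r, d (resp. r', d') are the rank and dimension of F (resp. F'). -/
open Polynomial

/-- An abelian `τ`-sheaf of rank `r`, dimension `d` and period `(k,l)` over `L`
(for the curve `C = ℙ¹`, so `Q = F_q(t)` and the generic fibre of the sheaves is
a vector space `V` over `RatFunc L`).  Since the `Φ_i` are injective with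
cokernel supported at `∞`, the sheaves `F_i` are realized as a common
`L[t]`-lattice `M0` (the sections away from `∞`) together with an increasing
chain of `L[1/t]`-lattices `N i` at `∞`, with periodicity `N (i+l) = t^k • N i`
and `dim_L coker Φ_i = d`; `τ` is the Frobenius-semilinear structure map, with
`τ(F_i) ⊆ F_{i+1}` and `dim_L coker τ_i = d`. -/
structure TauSheafData (L : Type) [Field L]
    (σF : RatFunc L →+* RatFunc L)
    (V : Type) [AddCommGroup V] [Module L V] [Module (RatFunc L) V]
    [IsScalarTower L (RatFunc L) V]
    (r d k l : ℕ) : Type where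
  tau : V → V
  tau_add : ∀ x y, tau (x + y) = tau x + tau y
  tau_smul : ∀ (c : RatFunc L) (v : V), tau (c • v) = σF c • tau v
  tau_inj : Function.Injective tau
  rank_eq : Module.finrank (RatFunc L) V = r
  pos_k : 0 < k
  pos_l : 0 < l
  weight_rel : l * d = k * r
  M0 : Submodule L V
  M0_stable : ∀ v ∈ M0, (RatFunc.X : RatFunc L) • v ∈ M0
  M0_fg : ∃ S : Finset V, (M0 : Set V) =
    ↑(Submodule.span L
      (⋃ s ∈ (S : Set V), Set.range fun n : ℕ => ((RatFunc.X : RatFunc L) ^ n) • s))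
  M0_full : Submodule.span (RatFunc L) (M0 : Set V) = ⊤
  tau_M0 : ∀ v ∈ M0, tau v ∈ M0
  coker_tau_dim : Module.finrank L
    (↥M0 ⧸ (Submodule.span L (tau '' M0)).comap M0.subtype) = d
  N : ℤ → Submodule L V
  N_stable : ∀ (i : ℤ), ∀ v ∈ N i, ((RatFunc.X : RatFunc L))⁻¹ • v ∈ N i
  N_fg : ∀ i : ℤ, ∃ S : Finset V, ((N i : Set V)) =
    ↑(Submodule.span L
      (⋃ s ∈ (S : Set V), Set.range fun n : ℕ => (((RatFunc.X : RatFunc L))⁻¹ ^ n) • s))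
  N_full : ∀ i : ℤ, Submodule.span (RatFunc L) ((N i : Set V)) = ⊤
  N_mono : ∀ i : ℤ, N i ≤ N (i + 1)
  N_period : ∀ (i : ℤ) (v : V),
    v ∈ N (i + (l : ℤ)) ↔ ((RatFunc.X : RatFunc L) ^ k)⁻¹ • v ∈ N i
  coker_phi_dim : ∀ i : ℤ, Module.finrank L
    (↥(N (i + 1)) ⧸ (N i).comap (N (i + 1)).subtype) = d
  tau_N : ∀ (i : ℤ), ∀ v ∈ N i, tau v ∈ N (i + 1)

/-! The weight `d/r` of an abelian `τ`-sheaf equals `k/l`. Let `f` be a nonzero morphism and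
pick `v ∈ F_0` with `w = f v ≠ 0`. Twisting `v` by `t^(k k' n)` and using the periodicity of both
sheaves, `w` lies in `F'_(n (l k' - l' k))` for every `n ∈ ℤ`. A linear form on the generic fibre
has bounded pole order at `∞` on the lattice `F'_0`, so a nonzero `w` escapes `F'_m` for `m ≪ 0`;
hence `l k' = l' k` and the weights agree. -/

namespace TauSheafData

open WithZero

variable {L : Type} [Field L] {σF : RatFunc L →+* RatFunc L}

section Lattices

variable {V : Type} [AddCommGroup V] [Module L V] [Module (RatFunc L) V]
    [IsScalarTower L (RatFunc L) V] {r d k l : ℕ} (D : TauSheafData L σF V r d k l)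

theorem N_monotone : Monotone D.N :=
  monotone_int_of_le_succ D.N_mono

theorem X_pow_smul_mem_N_add_iff (i : ℤ) (x : V) :
    (RatFunc.X : RatFunc L) ^ k • x ∈ D.N (i + l) ↔ x ∈ D.N i := by
  rw [D.N_period, inv_smul_smul₀ (pow_ne_zero _ RatFunc.X_ne_zero)]

theorem X_zpow_smul_mem_N_add_iff (a i : ℤ) (x : V) :
    (RatFunc.X : RatFunc L) ^ ((k : ℤ) * a) • x ∈ D.N (i + l * a) ↔ x ∈ D.N i := by
  have step (a : ℤ) : (RatFunc.X : RatFunc L) ^ ((k : ℤ) * (a + 1)) • x ∈ D.N (i + l * (a + 1))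
      ↔ (RatFunc.X : RatFunc L) ^ ((k : ℤ) * a) • x ∈ D.N (i + l * a) := by
    rw [show (k : ℤ) * (a + 1) = k + k * a by ring, zpow_add₀ RatFunc.X_ne_zero, mul_smul,
      zpow_natCast, show i + l * (a + 1) = i + l * a + l by ring, X_pow_smul_mem_N_add_iff]
  induction a using Int.induction_on with
  | zero => simp
  | succ a ih => exact (step a).trans ih
  | pred a ih =>
    have h := step (-a - 1)
    rw [sub_add_cancel] at h
    exact h.symm.trans ih

theorem exists_inftyValuation_apply_le [DecidableEq (RatFunc L)]
    (φ : Module.Dual (RatFunc L) V) (i : ℤ) :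
    ∃ b : ℤ, ∀ x ∈ D.N i, RatFunc.inftyValuation L (φ x) ≤ exp b := by
  set v := RatFunc.inftyValuation L
  obtain ⟨S, hS⟩ := D.N_fg i
  obtain ⟨b, hb⟩ := (S.image fun s => log (v (φ s))).exists_le
  refine ⟨b, fun x hx => ?_⟩
  rw [← SetLike.mem_coe, hS, SetLike.mem_coe] at hx
  induction hx using Submodule.span_induction with
  | mem y hy =>
    simp only [Set.mem_iUnion, Set.mem_range] at hy
    obtain ⟨s, hs, n, rfl⟩ := hy
    calc v (φ ((RatFunc.X⁻¹) ^ n • s)) = exp (-(n : ℤ)) * v (φ s) := by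
          simp [v, map_smul, ← zpow_natCast]
      _ ≤ v (φ s) := mul_le_of_le_one_left' (by rw [← exp_zero, exp_le_exp]; omega)
      _ ≤ exp (log (v (φ s))) := le_exp_log
      _ ≤ exp b := exp_le_exp.2 (hb _ (Finset.mem_image_of_mem _ hs))
  | zero => simp
  | add x y _ _ hx hy =>
    rw [map_add]
    exact (v.map_add _ _).trans (max_le hx hy)
  | smul c x _ hx =>
    rw [LinearMap.map_smul_of_tower, Algebra.smul_def, map_mul]
    exact (mul_le_of_le_one_left' (Valuation.IsTrivialOn.valuation_algebraMap_le_one v c)).trans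
      hx

theorem exists_notMem_N {w : V} (hw : w ≠ 0) : ∃ m, w ∉ D.N m := by
  classical
  by_contra! hmem
  obtain ⟨φ, hφ⟩ : ∃ φ : Module.Dual (RatFunc L) V, φ w ≠ 0 := by
    by_contra! h
    exact hw ((Module.forall_dual_apply_eq_zero_iff _ w).1 h)
  obtain ⟨b, hb⟩ := D.exists_inftyValuation_apply_le φ 0
  have hbound (a : ℤ) : k * a + (φ w).intDegree ≤ b := by
    have h : (RatFunc.X : RatFunc L) ^ ((k : ℤ) * a) • w ∈ D.N 0 := by
      simpa using (D.X_zpow_smul_mem_N_add_iff a (-(l * a)) w).2 (hmem _)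
    have hv := hb _ h
    rw [map_smul, smul_eq_mul, map_mul, RatFunc.inftyValuation.X_zpow,
      RatFunc.inftyValuation_apply, RatFunc.inftyValuation_of_nonzero _ hφ, ← exp_add] at hv
    exact exp_le_exp.1 hv
  have := hbound (|b - (φ w).intDegree| + 1)
  have hk : (1 : ℤ) ≤ k := by exact_mod_cast D.pos_k
  nlinarith [le_abs_self (b - (φ w).intDegree), abs_nonneg (b - (φ w).intDegree)]

end Lattices

section Morphism

variable {V V' : Type} [AddCommGroup V] [Module L V] [Module (RatFunc L) V]
    [IsScalarTower L (RatFunc L) V]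
    [AddCommGroup V'] [Module L V'] [Module (RatFunc L) V']
    [IsScalarTower L (RatFunc L) V']
    {r d k l r' d' k' l' : ℕ}
    (A : TauSheafData L σF V r d k l) (B : TauSheafData L σF V' r' d' k' l')
    (f : V →ₗ[RatFunc L] V')

theorem apply_mem_N_mul (hfN : ∀ (i : ℤ), ∀ v ∈ A.N i, f v ∈ B.N i) {v : V} (hv : v ∈ A.N 0)
    (n : ℤ) :
    f v ∈ B.N (n * (l * k' - l' * k)) := by
  have hA := hfN _ _ ((A.X_zpow_smul_mem_N_add_iff (k' * n) 0 v).2 hv)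
  rw [map_smul, show (k : ℤ) * (k' * n) = k' * (k * n) by ring,
    show (0 : ℤ) + l * (k' * n) = n * (l * k' - l' * k) + l' * (k * n) by ring] at hA
  exact (B.X_zpow_smul_mem_N_add_iff (k * n) _ _).1 hA

theorem period_eq_of_ne_zero (hfN : ∀ (i : ℤ), ∀ v ∈ A.N i, f v ∈ B.N i) (hf : f ≠ 0) :
    l * k' = l' * k := by
  obtain ⟨v, hv, hfv⟩ : ∃ v ∈ A.N 0, f v ≠ 0 := by
    by_contra! h
    exact hf (LinearMap.ext_on (A.N_full 0) h)
  obtain ⟨m, hm⟩ := B.exists_notMem_N hfv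
  by_contra hne
  have hc : (l * k' - l' * k : ℤ) ≠ 0 := by omega
  refine hm (B.N_monotone ?_ (apply_mem_N_mul A B f hfN hv (-(|m| * (l * k' - l' * k)))))
  nlinarith [neg_abs_le m, abs_nonneg m, sq_pos_of_ne_zero hc]

end Morphism

end TauSheafData

theorem stmt7_general {L : Type} [Field L]
    (σF : RatFunc L →+* RatFunc L)
    {V V' : Type} [AddCommGroup V] [Module L V] [Module (RatFunc L) V]
    [IsScalarTower L (RatFunc L) V]
    [AddCommGroup V'] [Module L V'] [Module (RatFunc L) V']
    [IsScalarTower L (RatFunc L) V']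
    {r d k l r' d' k' l' : ℕ}
    (A : TauSheafData L σF V r d k l) (B : TauSheafData L σF V' r' d' k' l')
    (f : V →ₗ[RatFunc L] V') (hf : f ≠ 0)
    (hfN : ∀ (i : ℤ), ∀ v ∈ A.N i, f v ∈ B.N i) :
    d * r' = d' * r := by
  have hperiod := TauSheafData.period_eq_of_ne_zero A B f hfN hf
  apply Nat.eq_of_mul_eq_mul_left (Nat.mul_pos A.pos_l B.pos_l)
  linear_combination (l' * r') * A.weight_rel - (l * r) * B.weight_rel - (r * r') * hperiod

/-- a nonzero morphism of abelian `τ`-sheaves (a linear map of the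
generic fibres commuting with the structure maps `τ` and preserving the lattices,
i.e. commuting with all `Φ_i` and `τ_i`) forces the weights to agree:
`d/r = d'/r'`, i.e. `d·r' = d'·r`. -/
theorem stmt7 {q : ℕ} (hq : 1 < q) {L : Type} [Field L]
    (frob : L →+* L) (hfrob : ∀ x : L, frob x = x ^ q)
    (σF : RatFunc L →+* RatFunc L)
    (hσF : ∀ p : Polynomial L,
      σF (algebraMap (Polynomial L) (RatFunc L) p)
        = algebraMap (Polynomial L) (RatFunc L) (p.map frob))
    {V V' : Type} [AddCommGroup V] [Module L V] [Module (RatFunc L) V]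
    [IsScalarTower L (RatFunc L) V]
    [AddCommGroup V'] [Module L V'] [Module (RatFunc L) V']
    [IsScalarTower L (RatFunc L) V']
    {r d k l r' d' k' l' : ℕ}
    (A : TauSheafData L σF V r d k l) (B : TauSheafData L σF V' r' d' k' l')
    (f : V →ₗ[RatFunc L] V') (hf : f ≠ 0)
    (hfτ : ∀ v : V, f (A.tau v) = B.tau (f v))
    (hfM0 : ∀ v ∈ A.M0, f v ∈ B.M0)
    (hfN : ∀ (i : ℤ), ∀ v ∈ A.N i, f v ∈ B.N i) :
    d * r' = d' * r :=
  stmt7_general σF A B f hf hfN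
end

section
/- If f: M → M' is an isogeny of pure A-motives over a field L (injective with torsion cokernel, compatible with τ), then there exists a nonzero a ∈ A (not merely in A_L = A⊗_{F_q}L) annihilating coker f, and consequently a dual isogeny f^∨: M' → M with f ∘ f^∨ = a·id and f^∨ ∘ f = a·id. -/
/-!
Choose bases of `M` and `M'` over `L[X]`; they are free of the same rank, being projective
over a PID and related by an injection with torsion cokernel. Let `F`, `T`, `T'` be the matrices
of `f`, `τ`, `τ'`, and `σ` the Frobenius acting on coefficients. The compatibility
`f ∘ τ = τ' ∘ f` reads `F * T = T' * σ(F)`, so `det F * det T = det T' * σ(det F)`. Since the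
cokernels of `τ` and `τ'` are killed by powers of `X - θ`, both `det T` and `det T'` are
associated to powers of `X - θ`; as `σ` preserves degrees, `det F` and `σ(det F)` are associated.
Hence the monic normalization `a` of `det F` is fixed by `σ`. By the adjugate formula `a` kills
the cokernel of `f`, and `a • f⁻¹` is the dual isogeny.
-/

open Polynomial Module Matrix

theorem Matrix.det_dvd_pow_of_mul_eq_smul_one {n R : Type*} [Fintype n] [DecidableEq n]
    [CommRing R] {A S : Matrix n n R} {c : R} (h : A * S = c • 1) :
    A.det ∣ c ^ Fintype.card n :=
  ⟨S.det, by rw [← det_mul, h, det_smul, det_one, mul_one]⟩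

section

variable {R : Type*} [CommRing R] {σ : R →+* R} {M M' : Type*} [AddCommGroup M] [Module R M]
  [AddCommGroup M'] [Module R M'] {ι κ : Type*} [Fintype ι] [Fintype κ]

theorem LinearMap.exists_comp_eq_smul_of_smul_mem_range {f : M →ₗ[R] M'}
    (hf : Function.Injective f) {a : R} (ha : ∀ y, a • y ∈ range f) :
    ∃ g : M' →ₗ[R] M, ∀ y, f (g y) = a • y := by
  let e := LinearEquiv.ofInjective f hf
  refine ⟨e.symm.toLinearMap ∘ₗ (a • LinearMap.id).codRestrict _ ha, fun y => ?_⟩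
  have := congrArg Subtype.val (e.apply_symm_apply ⟨a • y, ha y⟩)
  rwa [LinearEquiv.ofInjective_apply] at this

theorem LinearMap.finrank_eq_of_injective_of_smul_mem_range [IsDomain R] [Module.Finite R M]
    [Module.Finite R M'] [IsTorsionFree R M'] {f : M →ₗ[R] M'} (hf : Function.Injective f)
    {a : R} (ha0 : a ≠ 0) (ha : ∀ y, a • y ∈ range f) :
    finrank R M = finrank R M' := by
  obtain ⟨g, hg⟩ := exists_comp_eq_smul_of_smul_mem_range hf ha
  have hg_inj : Function.Injective g := fun y₁ y₂ h =>
    smul_right_injective M' ha0 (by simp only [← hg, h])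
  exact (finrank_le_finrank_of_injective hf).antisymm (finrank_le_finrank_of_injective hg_inj)

theorem LinearMap.exists_dual_of_smul_mem_range [IsDomain R] [IsTorsionFree R M']
    (τ : M →ₛₗ[σ] M) (τ' : M' →ₛₗ[σ] M') {f : M →ₗ[R] M'} (hf : Function.Injective f)
    (hcompat : ∀ x, f (τ x) = τ' (f x)) {a : R} (ha0 : a ≠ 0) (hσa : σ a = a)
    (ha : ∀ y, a • y ∈ range f) :
    ∃ g : M' →ₗ[R] M,
      Function.Injective g ∧
      (∀ y : M', g (τ' y) = τ (g y)) ∧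
      (∀ x : M, g (f x) = a • x) ∧
      (∀ y : M', f (g y) = a • y) ∧
      (∃ c : R, c ≠ 0 ∧ ∀ x : M, c • x ∈ range g) := by
  obtain ⟨g, hfg⟩ := exists_comp_eq_smul_of_smul_mem_range hf ha
  have hgf : ∀ x, g (f x) = a • x := fun x => hf (by rw [hfg, map_smul])
  refine ⟨g, fun y₁ y₂ h => smul_right_injective M' ha0 (by simp only [← hfg, h]),
    fun y => hf ?_, hgf, hfg, a, ha0, fun x => ⟨f x, hgf x⟩⟩
  rw [hfg, hcompat, hfg, map_smulₛₗ, hσa]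

theorem Module.Basis.repr_semilinearMap (b : Basis ι R M) (τ : M →ₛₗ[σ] M) (x : M) :
    ⇑(b.repr (τ x)) = b.toMatrix (τ ∘ b) *ᵥ (σ ∘ b.repr x) := by
  conv_lhs => rw [← b.sum_repr x, map_sum, map_sum]
  ext i
  simp [mulVec, dotProduct, Basis.toMatrix_apply, mul_comm, -Basis.sum_repr]

variable [DecidableEq ι]

theorem LinearMap.toMatrix_mul_toMatrix_semilinearMap (b : Basis ι R M) (b' : Basis κ R M')
    (τ : M →ₛₗ[σ] M) (τ' : M' →ₛₗ[σ] M') (f : M →ₗ[R] M') (hf : ∀ x, f (τ x) = τ' (f x)) :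
    toMatrix b b' f * b.toMatrix (τ ∘ b) = b'.toMatrix (τ' ∘ b') * (toMatrix b b' f).map σ := by
  ext i j
  have := congrFun (b'.repr_semilinearMap τ' (f (b j))) i
  rw [← hf, ← toMatrix_mulVec_repr b b'] at this
  simpa [mul_apply, mulVec, dotProduct, Basis.toMatrix_apply, toMatrix_apply] using this

theorem LinearMap.det_toMatrix_mul_det_toMatrix_semilinearMap (b : Basis ι R M)
    (b' : Basis ι R M') (τ : M →ₛₗ[σ] M) (τ' : M' →ₛₗ[σ] M') (f : M →ₗ[R] M')
    (hf : ∀ x, f (τ x) = τ' (f x)) :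
    (toMatrix b b' f).det * (b.toMatrix (τ ∘ b)).det =
      (b'.toMatrix (τ' ∘ b')).det * σ (toMatrix b b' f).det := by
  rw [← det_mul, toMatrix_mul_toMatrix_semilinearMap b b' τ τ' f hf, det_mul, RingHom.map_det,
    RingHom.mapMatrix_apply]

theorem Module.Basis.exists_toMatrix_mul_eq_smul_one (b : Basis ι R M) (τ : M →ₛₗ[σ] M) (c : R)
    (hc : ∀ x, c • x ∈ Submodule.span R (Set.range τ)) :
    ∃ S : Matrix ι ι R, b.toMatrix (τ ∘ b) * S = c • 1 := by
  have hspan : Submodule.span R (Set.range τ) ≤ Submodule.span R (Set.range (τ ∘ b)) := by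
    refine Submodule.span_le.mpr ?_
    rintro _ ⟨x, rfl⟩
    rw [← b.sum_repr x, map_sum]
    refine Submodule.sum_mem _ fun k _ => ?_
    rw [map_smulₛₗ]
    exact Submodule.smul_mem _ _ (Submodule.subset_span ⟨k, rfl⟩)
  choose S hS using fun j => (Submodule.mem_span_range_iff_exists_fun R).mp (hspan (hc (b j)))
  refine ⟨(Matrix.of S).transpose, ?_⟩
  ext i j
  have := congrArg (fun y => b.repr y i) (hS j)
  simpa [mul_apply, Basis.toMatrix_apply, one_apply, Finsupp.single_apply, mul_comm,
    eq_comm] using this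

theorem Module.Basis.exists_associated_det_toMatrix_pow [IsDomain R] (b : Basis ι R M)
    (τ : M →ₛₗ[σ] M) {p : R} (hp : Prime p) {d : ℕ}
    (hd : ∀ x, p ^ d • x ∈ Submodule.span R (Set.range τ)) :
    ∃ k, Associated (b.toMatrix (τ ∘ b)).det (p ^ k) := by
  obtain ⟨S, hS⟩ := b.exists_toMatrix_mul_eq_smul_one τ _ hd
  have hdvd := det_dvd_pow_of_mul_eq_smul_one hS
  rw [← pow_mul] at hdvd
  obtain ⟨k, -, hk⟩ := (dvd_prime_pow hp _).mp hdvd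
  exact ⟨k, hk⟩

theorem LinearMap.det_toMatrix_smul_mem_range (b : Basis ι R M) (b' : Basis ι R M')
    (f : M →ₗ[R] M') (y : M') : (toMatrix b b' f).det • y ∈ range f := by
  refine ⟨toLin b' b (toMatrix b b' f).adjugate y, ?_⟩
  calc f (toLin b' b (toMatrix b b' f).adjugate y)
      = (toLin b b' (toMatrix b b' f) ∘ₗ toLin b' b (toMatrix b b' f).adjugate) y := by
        rw [toLin_toMatrix]; rfl
    _ = (toMatrix b b' f).det • y := by
        rw [← toLin_mul, mul_adjugate, map_smul, toLin_one]; rfl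

theorem LinearMap.det_toMatrix_ne_zero_of_injective [IsDomain R] (b : Basis ι R M)
    (b' : Basis ι R M') {f : M →ₗ[R] M'} (hf : Function.Injective f) :
    (toMatrix b b' f).det ≠ 0 := by
  intro h
  obtain ⟨v, hv0, hv⟩ := exists_mulVec_eq_zero_iff.mpr h
  refine hv0 (b.equivFun.symm.injective (hf (b'.equivFun.injective ?_)))
  rw [Basis.equivFun_apply, ← toMatrix_mulVec_repr b b', ← Basis.equivFun_apply,
    LinearEquiv.apply_symm_apply, hv, map_zero, map_zero, map_zero]

end

namespace Polynomial

variable {L : Type*} [Field L] (frob : L →+* L)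

theorem associated_map_of_mul_eq_mul {θ : L} {δ A A' : L[X]} {k k' : ℕ}
    (hA : Associated A ((X - C θ) ^ k)) (hA' : Associated A' ((X - C θ) ^ k'))
    (h : δ * A = A' * δ.map frob) : Associated δ (δ.map frob) := by
  rcases eq_or_ne δ 0 with rfl | hδ
  · simp
  have hδ' : δ.map frob ≠ 0 := (Polynomial.map_ne_zero_iff frob.injective).mpr hδ
  have hpow : ∀ n, (X - C θ) ^ n ≠ 0 := fun n => pow_ne_zero n (X_sub_C_ne_zero θ)
  have hassoc : Associated (δ * (X - C θ) ^ k) (δ.map frob * (X - C θ) ^ k') := by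
    rw [mul_comm (δ.map frob)]
    exact (hA.mul_left δ).symm.trans (h ▸ hA'.mul_right _)
  have hkk' : k = k' := by
    have := natDegree_eq_of_degree_eq (degree_eq_degree_of_associated hassoc)
    rwa [natDegree_mul hδ (hpow k), natDegree_mul hδ' (hpow k'),
      natDegree_map_eq_of_injective frob.injective, natDegree_pow, natDegree_pow,
      natDegree_X_sub_C, Nat.add_left_cancel_iff, mul_one, mul_one] at this
  subst hkk'
  exact hassoc.of_mul_right .rfl (hpow k)

theorem map_normalize_eq_of_associated [DecidableEq L] {δ : L[X]}
    (h : Associated δ (δ.map frob)) : (normalize δ).map frob = normalize δ := by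
  rcases eq_or_ne δ 0 with rfl | hδ
  · simp
  refine eq_of_monic_of_associated ((monic_normalize hδ).map frob) (monic_normalize hδ) ?_
  exact ((normalize_associated δ).map (mapRingHom frob)).trans
    (h.symm.trans (normalize_associated δ).symm)

end Polynomial

theorem exists_map_eq_self_smul_mem_range {L : Type*} [Field L] (frob : L →+* L) (θ : L)
    {M M' : Type*} [AddCommGroup M] [Module L[X] M] [AddCommGroup M'] [Module L[X] M']
    [Module.Finite L[X] M] [Module.Projective L[X] M]
    [Module.Finite L[X] M'] [Module.Projective L[X] M']
    (τ : M →ₛₗ[mapRingHom frob] M) (τ' : M' →ₛₗ[mapRingHom frob] M')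
    (hJ : ∃ d : ℕ, ∀ x : M, (X - C θ) ^ d • x ∈ Submodule.span L[X] (Set.range τ))
    (hJ' : ∃ d : ℕ, ∀ y : M', (X - C θ) ^ d • y ∈ Submodule.span L[X] (Set.range τ'))
    {f : M →ₗ[L[X]] M'} (hf : Function.Injective f) (hcompat : ∀ x, f (τ x) = τ' (f x))
    (htors : ∃ b : L[X], b ≠ 0 ∧ ∀ y : M', b • y ∈ LinearMap.range f) :
    ∃ a : L[X], a ≠ 0 ∧ a.map frob = a ∧ ∀ y : M', a • y ∈ LinearMap.range f := by
  classical
  obtain ⟨d, hd⟩ := hJ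
  obtain ⟨d', hd'⟩ := hJ'
  obtain ⟨b₀, hb₀, hb₀f⟩ := htors
  have hrank := LinearMap.finrank_eq_of_injective_of_smul_mem_range hf hb₀ hb₀f
  let b := finBasisOfFinrankEq L[X] M rfl
  let b' := finBasisOfFinrankEq L[X] M' hrank.symm
  set δ := (LinearMap.toMatrix b b' f).det
  obtain ⟨k, hk⟩ := b.exists_associated_det_toMatrix_pow τ (prime_X_sub_C θ) hd
  obtain ⟨k', hk'⟩ := b'.exists_associated_det_toMatrix_pow τ' (prime_X_sub_C θ) hd'
  have hδ : Associated δ (δ.map frob) := associated_map_of_mul_eq_mul frob hk hk'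
    (LinearMap.det_toMatrix_mul_det_toMatrix_semilinearMap b b' τ τ' f hcompat)
  refine ⟨normalize δ, normalize_eq_zero.not.mpr
    (LinearMap.det_toMatrix_ne_zero_of_injective b b' hf),
    map_normalize_eq_of_associated frob hδ, fun y => ?_⟩
  rw [normalize_apply, mul_comm, mul_smul]
  exact Submodule.smul_mem _ _ (LinearMap.det_toMatrix_smul_mem_range b b' f y)

theorem stmt10_general {L : Type} [Field L]
    (frob : L →+* L) (θ : L)
    {M M' : Type} [AddCommGroup M] [Module (Polynomial L) M]
    [AddCommGroup M'] [Module (Polynomial L) M']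
    [Module.Finite (Polynomial L) M] [Module.Projective (Polynomial L) M]
    [Module.Finite (Polynomial L) M'] [Module.Projective (Polynomial L) M']
    (τ : M → M) (τ' : M' → M')
    (hτadd : ∀ x y, τ (x + y) = τ x + τ y)
    (hτsl : ∀ (p : Polynomial L) (x : M), τ (p • x) = (p.map frob) • τ x)
    (hτ'add : ∀ x y, τ' (x + y) = τ' x + τ' y)
    (hτ'sl : ∀ (p : Polynomial L) (y : M'), τ' (p • y) = (p.map frob) • τ' y)
    -- characteristic `c* : A → L`, `t ↦ θ`: the cokernels of `τ, τ'` are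
    -- finite dimensional over `L` and annihilated by a power of `J = (t - θ)`
    (hJ : ∃ dM : ℕ, ∀ y : M, ((X - C θ) ^ dM : Polynomial L) • y ∈
      Submodule.span (Polynomial L) (Set.range τ))
    (hJ' : ∃ dM' : ℕ, ∀ y : M', ((X - C θ) ^ dM' : Polynomial L) • y ∈
      Submodule.span (Polynomial L) (Set.range τ'))
    -- the isogeny
    (f : M →ₗ[Polynomial L] M') (hfinj : Function.Injective f)
    (hcompat : ∀ x : M, f (τ x) = τ' (f x))
    (htors : ∃ b : Polynomial L, b ≠ 0 ∧ ∀ y : M', b • y ∈ LinearMap.range f) :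
    ∃ a : Polynomial L, a ≠ 0 ∧
      (∀ n : ℕ, frob (a.coeff n) = a.coeff n) ∧
      (∀ y : M', a • y ∈ LinearMap.range f) ∧
      ∃ g : M' →ₗ[Polynomial L] M,
        Function.Injective g ∧
        (∀ y : M', g (τ' y) = τ (g y)) ∧
        (∀ x : M, g (f x) = a • x) ∧
        (∀ y : M', f (g y) = a • y) ∧
        (∃ c : Polynomial L, c ≠ 0 ∧ ∀ x : M, c • x ∈ LinearMap.range g) := by
  let τL : M →ₛₗ[mapRingHom frob] M := ⟨⟨τ, hτadd⟩, hτsl⟩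
  let τL' : M' →ₛₗ[mapRingHom frob] M' := ⟨⟨τ', hτ'add⟩, hτ'sl⟩
  obtain ⟨a, ha0, hfix, ha⟩ :=
    exists_map_eq_self_smul_mem_range frob θ τL τL' hJ hJ' hfinj hcompat htors
  exact ⟨a, ha0, fun n => by rw [← coeff_map, hfix], ha,
    LinearMap.exists_dual_of_smul_mem_range τL τL' hfinj hcompat ha0 hfix ha⟩

/-- if `f : M → M'` is an isogeny of (pure) `A`-motives over `L`
(here `A = F_q[t]`, `A_L = L[t]`), i.e. an injective `τ`-compatible map with
torsion cokernel, then the cokernel of `f` is annihilated by a nonzero element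
`a ∈ A` (i.e. a polynomial all of whose coefficients are fixed by the
`q`-Frobenius, not merely an element of `A_L`), and consequently there is a dual
isogeny `f^∨ : M' → M` with `f ∘ f^∨ = a·id` and `f^∨ ∘ f = a·id`. -/
theorem stmt10 {q : ℕ} (hq : 1 < q) {L : Type} [Field L]
    (frob : L →+* L) (hfrob : ∀ x : L, frob x = x ^ q) (θ : L)
    {M M' : Type} [AddCommGroup M] [Module (Polynomial L) M]
    [AddCommGroup M'] [Module (Polynomial L) M']
    [Module L M] [IsScalarTower L (Polynomial L) M]
    [Module L M'] [IsScalarTower L (Polynomial L) M']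
    [Module.Finite (Polynomial L) M] [Module.Projective (Polynomial L) M]
    [Module.Finite (Polynomial L) M'] [Module.Projective (Polynomial L) M']
    (τ : M → M) (τ' : M' → M')
    (hτadd : ∀ x y, τ (x + y) = τ x + τ y)
    (hτsl : ∀ (p : Polynomial L) (x : M), τ (p • x) = (p.map frob) • τ x)
    (hτinj : Function.Injective τ)
    (hτ'add : ∀ x y, τ' (x + y) = τ' x + τ' y)
    (hτ'sl : ∀ (p : Polynomial L) (y : M'), τ' (p • y) = (p.map frob) • τ' y)
    (hτ'inj : Function.Injective τ')
    -- characteristic `c* : A → L`, `t ↦ θ`: the cokernels of `τ, τ'` are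
    -- finite dimensional over `L` and annihilated by a power of `J = (t - θ)`
    [FiniteDimensional L (M ⧸ Submodule.span (Polynomial L) (Set.range τ))]
    [FiniteDimensional L (M' ⧸ Submodule.span (Polynomial L) (Set.range τ'))]
    (hJ : ∃ dM : ℕ, ∀ y : M, ((X - C θ) ^ dM : Polynomial L) • y ∈
      Submodule.span (Polynomial L) (Set.range τ))
    (hJ' : ∃ dM' : ℕ, ∀ y : M', ((X - C θ) ^ dM' : Polynomial L) • y ∈
      Submodule.span (Polynomial L) (Set.range τ'))
    -- the isogeny
    (f : M →ₗ[Polynomial L] M') (hfinj : Function.Injective f)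
    (hcompat : ∀ x : M, f (τ x) = τ' (f x))
    (htors : ∃ b : Polynomial L, b ≠ 0 ∧ ∀ y : M', b • y ∈ LinearMap.range f) :
    ∃ a : Polynomial L, a ≠ 0 ∧
      (∀ n : ℕ, frob (a.coeff n) = a.coeff n) ∧
      (∀ y : M', a • y ∈ LinearMap.range f) ∧
      ∃ g : M' →ₗ[Polynomial L] M,
        Function.Injective g ∧
        (∀ y : M', g (τ' y) = τ (g y)) ∧
        (∀ x : M, g (f x) = a • x) ∧
        (∀ y : M', f (g y) = a • y) ∧
        (∃ c : Polynomial L, c ≠ 0 ∧ ∀ x : M, c • x ∈ LinearMap.range g) :=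
  stmt10_general frob θ τ τ' hτadd hτsl hτ'add hτ'sl hJ hJ' f hfinj hcompat htors
end

section
/- Let F be an abelian τ-sheaf over a field L. If the rank r and dimension d of F are relatively prime, then F is simple: every surjective morphism from F onto an abelian τ-sheaf F̃ is either zero (F̃ = 0) or an isomorphism. -/
open Polynomial

set_option synthInstance.maxHeartbeats 400000

namespace Stmt11Aux

lemma intDegree_X_pow {L : Type} [Field L] (n : ℕ) :
    ((RatFunc.X : RatFunc L) ^ n).intDegree = n := by
  induction n with
  | zero => simpa using RatFunc.intDegree_one
  | succ n ih =>
      rw [pow_succ, RatFunc.intDegree_mul (pow_ne_zero _ RatFunc.X_ne_zero) RatFunc.X_ne_zero,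
        ih, RatFunc.intDegree_X]
      push_cast; ring

/-- Elements of an `L[X⁻¹]`-lattice have bounded degree after applying a
`RatFunc L`-linear functional. -/
lemma bounded {L W : Type} [Field L] [AddCommGroup W] [Module L W]
    [Module (RatFunc L) W] [IsScalarTower L (RatFunc L) W]
    (S : Finset W) (φ : W →ₗ[RatFunc L] RatFunc L) :
    ∃ D : ℤ, ∀ u ∈ Submodule.span L
      (⋃ s ∈ (S : Set W), Set.range fun n : ℕ => ((RatFunc.X : RatFunc L))⁻¹ ^ n • s),
      φ u ≠ 0 → (φ u).intDegree ≤ D := by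
  obtain ⟨D, hD⟩ := (S.image fun s => (φ s).intDegree).exists_le
  refine ⟨D, fun u hu => ?_⟩
  induction hu using Submodule.span_induction with
  | mem x hx =>
      simp only [Set.mem_iUnion, Set.mem_range] at hx
      obtain ⟨s, hs, n, rfl⟩ := hx
      intro hne
      have hφx : φ ((RatFunc.X : RatFunc L)⁻¹ ^ n • s)
          = (RatFunc.X : RatFunc L)⁻¹ ^ n * φ s := by
        rw [map_smul, smul_eq_mul]
      rw [hφx] at hne ⊢
      have hXn : ((RatFunc.X : RatFunc L) ^ n) ≠ 0 := pow_ne_zero _ RatFunc.X_ne_zero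
      have hφs : φ s ≠ 0 := fun h => hne (by rw [h, mul_zero])
      have hinv : ((RatFunc.X : RatFunc L)⁻¹ ^ n) ≠ 0 := by
        rw [inv_pow]; exact inv_ne_zero hXn
      have hle : (φ s).intDegree ≤ D := hD _ (Finset.mem_image_of_mem _ hs)
      have h1 : ((RatFunc.X : RatFunc L) ^ n)⁻¹.intDegree = -(n : ℤ) := by
        have h2 := RatFunc.intDegree_mul hXn (inv_ne_zero hXn)
        rw [mul_inv_cancel₀ hXn, RatFunc.intDegree_one, intDegree_X_pow] at h2
        omega
      rw [RatFunc.intDegree_mul hinv hφs, inv_pow, h1]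
      omega
  | zero => intro h; simp at h
  | add x y hx hy ihx ihy =>
      intro hne
      rw [map_add] at hne ⊢
      by_cases h1 : φ x = 0
      · rw [h1, zero_add] at hne ⊢; exact ihy hne
      by_cases h2 : φ y = 0
      · rw [h2, add_zero] at hne ⊢; exact ihx hne
      · exact le_trans (RatFunc.intDegree_add_le h2 hne) (max_le (ihx h1) (ihy h2))
  | smul a x hx ihx =>
      intro hne
      have hax : φ (a • x) = algebraMap L (RatFunc L) a * φ x := by
        rw [← algebraMap_smul (RatFunc L) a x, map_smul, smul_eq_mul]
      rw [hax] at hne ⊢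
      have ha : algebraMap L (RatFunc L) a ≠ 0 := left_ne_zero_of_mul hne
      have hx0 : φ x ≠ 0 := right_ne_zero_of_mul hne
      rw [RatFunc.intDegree_mul ha hx0, RatFunc.algebraMap_eq_C, RatFunc.intDegree_C]
      simpa using ihx hx0

/-- From a family of lattice elements with unboundedly growing degree we get a
contradiction. -/
lemma unbounded_contra {L W : Type} [Field L] [AddCommGroup W] [Module L W]
    [Module (RatFunc L) W] [IsScalarTower L (RatFunc L) W]
    (S : Finset W) (φ : W →ₗ[RatFunc L] RatFunc L) {e : ℕ} (he : 0 < e) {w : W}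
    (hφw : φ w ≠ 0)
    (hmem : ∀ n : ℕ, ∃ u ∈ Submodule.span L
      (⋃ s ∈ (S : Set W), Set.range fun n : ℕ => ((RatFunc.X : RatFunc L))⁻¹ ^ n • s),
      φ u = (RatFunc.X : RatFunc L) ^ (e * n) * φ w) : False := by
  obtain ⟨D, hD⟩ := bounded S φ
  set c := (φ w).intDegree with hc
  set n := (D - c).toNat + 1 with hn
  obtain ⟨u, hu, hφu⟩ := hmem n
  have hXe : ((RatFunc.X : RatFunc L)) ^ (e * n) ≠ 0 := pow_ne_zero _ RatFunc.X_ne_zero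
  have hne : φ u ≠ 0 := by rw [hφu]; exact mul_ne_zero hXe hφw
  have hle := hD u hu hne
  rw [hφu, RatFunc.intDegree_mul hXe hφw, intDegree_X_pow] at hle
  have h1 : (n : ℤ) ≤ ((e * n : ℕ) : ℤ) := by
    exact_mod_cast Nat.le_mul_of_pos_left n he
  omega

/-- Iterated periodicity of the lattices at infinity. -/
lemma N_iter {L : Type} [Field L] {σF : RatFunc L →+* RatFunc L}
    {V : Type} [AddCommGroup V] [Module L V] [Module (RatFunc L) V]
    [IsScalarTower L (RatFunc L) V] {r d k l : ℕ}
    (A : TauSheafData L σF V r d k l) (m : ℕ) (i : ℤ) (v : V) :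
    v ∈ A.N (i + (l : ℤ) * m) ↔ (((RatFunc.X : RatFunc L) ^ k)⁻¹) ^ m • v ∈ A.N i := by
  induction m generalizing i v with
  | zero => simp
  | succ m ih =>
      have h1 : (i + (l : ℤ) * ((m : ℕ) + 1 : ℕ)) = (i + (l : ℤ)) + (l : ℤ) * m := by
        push_cast; ring
      rw [h1, ih, A.N_period, smul_smul, ← pow_succ']

lemma N_iter_fwd {L : Type} [Field L] {σF : RatFunc L →+* RatFunc L}
    {V : Type} [AddCommGroup V] [Module L V] [Module (RatFunc L) V]
    [IsScalarTower L (RatFunc L) V] {r d k l : ℕ}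
    (A : TauSheafData L σF V r d k l) (m : ℕ) (i : ℤ) (u : V) (hu : u ∈ A.N i) :
    ((RatFunc.X : RatFunc L) ^ k) ^ m • u ∈ A.N (i + (l : ℤ) * m) := by
  rw [N_iter]
  have h : (((RatFunc.X : RatFunc L) ^ k)⁻¹) ^ m • ((RatFunc.X : RatFunc L) ^ k) ^ m • u
      = u := by
    rw [smul_smul, ← mul_pow, inv_mul_cancel₀ (pow_ne_zero _ RatFunc.X_ne_zero), one_pow,
      one_smul]
  rw [h]; exact hu

lemma smul_cancel {L W : Type} [Field L] [AddCommGroup W] [Module (RatFunc L) W]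
    (a b e : ℕ) (h : b = a + e) (w : W) :
    ((RatFunc.X : RatFunc L) ^ a)⁻¹ • ((RatFunc.X : RatFunc L) ^ b • w)
      = (RatFunc.X : RatFunc L) ^ e • w := by
  subst h
  rw [smul_smul, pow_add, inv_mul_cancel_left₀ (pow_ne_zero _ RatFunc.X_ne_zero)]

/-- A lattice whose `RatFunc L`-span is everything gives finite-dimensionality. -/
lemma finite_of_lattice {L W : Type} [Field L] [AddCommGroup W] [Module L W]
    [Module (RatFunc L) W] [IsScalarTower L (RatFunc L) W]
    (S : Finset W) (Nsub : Submodule L W)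
    (h : (Nsub : Set W) = ↑(Submodule.span L
      (⋃ s ∈ (S : Set W), Set.range fun n : ℕ => ((RatFunc.X : RatFunc L))⁻¹ ^ n • s)))
    (hfull : Submodule.span (RatFunc L) (Nsub : Set W) = ⊤) :
    Module.Finite (RatFunc L) W := by
  rw [Module.finite_def]
  refine ⟨S, le_antisymm le_top ?_⟩
  rw [← hfull]
  apply Submodule.span_le.mpr
  rw [h]
  intro x hx
  have hsub : Submodule.span L
      (⋃ s ∈ (S : Set W), Set.range fun n : ℕ => ((RatFunc.X : RatFunc L))⁻¹ ^ n • s)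
      ≤ (Submodule.span (RatFunc L) (S : Set W)).restrictScalars L := by
    apply Submodule.span_le.mpr
    intro y hy
    simp only [Set.mem_iUnion, Set.mem_range] at hy
    obtain ⟨s, hs, n, rfl⟩ := hy
    exact Submodule.smul_mem _ _ (Submodule.subset_span hs)
  exact hsub hx

end Stmt11Aux
/-- if the rank `r` and dimension `d` of an abelian `τ`-sheaf `F`
are relatively prime, then `F` is simple: every surjective morphism from `F`
onto an abelian `τ`-sheaf `F̃` (a linear map of generic fibres commuting with
`τ` which maps the lattices onto the lattices) is either zero (so `F̃ = 0`) or
an isomorphism. -/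
theorem stmt11 {q : ℕ} (hq : 1 < q) {L : Type} [Field L]
    (frob : L →+* L) (hfrob : ∀ x : L, frob x = x ^ q)
    (σF : RatFunc L →+* RatFunc L)
    (hσF : ∀ p : Polynomial L,
      σF (algebraMap (Polynomial L) (RatFunc L) p)
        = algebraMap (Polynomial L) (RatFunc L) (p.map frob))
    {V V' : Type} [AddCommGroup V] [Module L V] [Module (RatFunc L) V]
    [IsScalarTower L (RatFunc L) V]
    [AddCommGroup V'] [Module L V'] [Module (RatFunc L) V']
    [IsScalarTower L (RatFunc L) V']
    {r d k l r' d' k' l' : ℕ}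
    (hcop : Nat.Coprime r d)
    (A : TauSheafData L σF V r d k l) (B : TauSheafData L σF V' r' d' k' l')
    (f : V →ₗ[RatFunc L] V')
    (hfτ : ∀ v : V, f (A.tau v) = B.tau (f v))
    (hfM0 : ∀ v ∈ A.M0, f v ∈ B.M0)
    (hfN : ∀ (i : ℤ), ∀ v ∈ A.N i, f v ∈ B.N i)
    -- surjectivity of the morphism of abelian `τ`-sheaves
    (hfM0surj : ∀ w ∈ B.M0, ∃ v ∈ A.M0, f v = w)
    (hfNsurj : ∀ (i : ℤ), ∀ w ∈ B.N i, ∃ v ∈ A.N i, f v = w) :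
    (∀ w : V', w = 0) ∨ Function.Bijective f := by
  classical
  by_cases hV' : ∀ w : V', w = 0
  · exact Or.inl hV'
  right
  push_neg at hV'
  obtain ⟨w0, hw0⟩ := hV'
  obtain ⟨SA, hSA⟩ := A.N_fg 0
  obtain ⟨SB, hSB⟩ := B.N_fg 0
  haveI hVfin : Module.Finite (RatFunc L) V :=
    Stmt11Aux.finite_of_lattice SA (A.N 0) hSA (A.N_full 0)
  haveI hV'fin : Module.Finite (RatFunc L) V' :=
    Stmt11Aux.finite_of_lattice SB (B.N 0) hSB (B.N_full 0)
  -- f is surjective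
  have hrange : LinearMap.range f = ⊤ := by
    rw [← top_le_iff, ← B.M0_full]
    apply Submodule.span_le.mpr
    intro w hw
    obtain ⟨v, -, hv⟩ := hfM0surj w hw
    exact ⟨v, hv⟩
  have hfsurj : Function.Surjective f := LinearMap.range_eq_top.mp hrange
  -- find v0 ∈ A.N 0 with f v0 ≠ 0
  have hNker : ¬ ∀ v ∈ A.N 0, f v = 0 := by
    intro h
    have hle : Submodule.span (RatFunc L) ((A.N 0 : Set V)) ≤ LinearMap.ker f :=
      Submodule.span_le.mpr fun v hv => h v hv
    rw [A.N_full 0, top_le_iff] at hle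
    obtain ⟨v, hv⟩ := hfsurj w0
    exact hw0 (by rw [← hv]; exact LinearMap.mem_ker.mp (hle ▸ Submodule.mem_top))
  push_neg at hNker
  obtain ⟨v0, hv0N, hv0⟩ := hNker
  have hfv0N : f v0 ∈ B.N 0 := hfN 0 v0 hv0N
  -- a dual functional detecting f v0
  have hφex : ¬ ∀ φ : Module.Dual (RatFunc L) V', φ (f v0) = 0 := by
    rw [Module.forall_dual_apply_eq_zero_iff]
    exact hv0
  push_neg at hφex
  obtain ⟨φ, hφ⟩ := hφex
  -- membership transfer into spans
  have memA : ∀ u ∈ A.N 0, u ∈ Submodule.span L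
      (⋃ s ∈ (SA : Set V), Set.range fun n : ℕ => ((RatFunc.X : RatFunc L))⁻¹ ^ n • s) := by
    intro u hu
    have : u ∈ (A.N 0 : Set V) := hu
    rw [hSA] at this
    exact this
  have memB : ∀ u ∈ B.N 0, u ∈ Submodule.span L
      (⋃ s ∈ (SB : Set V'), Set.range fun n : ℕ => ((RatFunc.X : RatFunc L))⁻¹ ^ n • s) := by
    intro u hu
    have : u ∈ (B.N 0 : Set V') := hu
    rw [hSB] at this
    exact this
  -- equality of weights
  have hweight : k * l' = k' * l := by
    by_contra hne
    rcases Nat.lt_or_ge (k * l') (k' * l) with hlt | hge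
    · -- weight of B too large: pull back elements of growing degree
      set e := k' * l - k * l' with he
      have hepos : 0 < e := by omega
      apply Stmt11Aux.unbounded_contra SA (φ.comp f) hepos
        (w := v0) (by simpa using hφ)
      intro n
      have h1 : ((RatFunc.X : RatFunc L) ^ k') ^ (l * n) • (f v0)
          ∈ B.N (0 + (l' : ℤ) * (l * n : ℕ)) :=
        Stmt11Aux.N_iter_fwd B (l * n) 0 (f v0) hfv0N
      have hidx : (0 + (l' : ℤ) * ((l * n : ℕ) : ℤ)) = 0 + (l : ℤ) * ((l' * n : ℕ) : ℤ) := by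
        push_cast; ring
      rw [hidx] at h1
      obtain ⟨v, hvN, hvf⟩ := hfNsurj _ _ h1
      have h2 : (((RatFunc.X : RatFunc L) ^ k)⁻¹) ^ (l' * n) • v ∈ A.N 0 :=
        (Stmt11Aux.N_iter A (l' * n) 0 v).mp hvN
      refine ⟨_, memA _ h2, ?_⟩
      have hfu : f ((((RatFunc.X : RatFunc L) ^ k)⁻¹) ^ (l' * n) • v)
          = (RatFunc.X : RatFunc L) ^ (e * n) • f v0 := by
        rw [map_smul, hvf]
        have hp1 : (((RatFunc.X : RatFunc L) ^ k)⁻¹) ^ (l' * n)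
            = ((RatFunc.X : RatFunc L) ^ (k * (l' * n)))⁻¹ := by
          rw [inv_pow, ← pow_mul]
        have hp2 : ((RatFunc.X : RatFunc L) ^ k') ^ (l * n)
            = (RatFunc.X : RatFunc L) ^ (k' * (l * n)) := by
          rw [← pow_mul]
        rw [hp1, hp2]
        apply Stmt11Aux.smul_cancel
        have hkl : k' * l = k * l' + e := by omega
        calc k' * (l * n) = (k' * l) * n := by ring
          _ = (k * l' + e) * n := by rw [hkl]
          _ = k * (l' * n) + e * n := by ring
      rw [LinearMap.comp_apply, hfu, map_smul, smul_eq_mul, LinearMap.comp_apply]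
    · -- weight of A too large: push forward elements of growing degree
      have hlt' : k' * l < k * l' := by omega
      set e := k * l' - k' * l with he
      have hepos : 0 < e := by omega
      apply Stmt11Aux.unbounded_contra SB φ hepos (w := f v0) hφ
      intro n
      have h1 : ((RatFunc.X : RatFunc L) ^ k) ^ (l' * n) • v0
          ∈ A.N (0 + (l : ℤ) * (l' * n : ℕ)) :=
        Stmt11Aux.N_iter_fwd A (l' * n) 0 v0 hv0N
      have h2 := hfN _ _ h1
      rw [map_smul] at h2
      have hidx : (0 + (l : ℤ) * ((l' * n : ℕ) : ℤ)) = 0 + (l' : ℤ) * ((l * n : ℕ) : ℤ) := by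
        push_cast; ring
      rw [hidx] at h2
      have h3 : (((RatFunc.X : RatFunc L) ^ k')⁻¹) ^ (l * n)
          • (((RatFunc.X : RatFunc L) ^ k) ^ (l' * n) • f v0) ∈ B.N 0 :=
        (Stmt11Aux.N_iter B (l * n) 0 _).mp h2
      have hscal : (((RatFunc.X : RatFunc L) ^ k')⁻¹) ^ (l * n)
          • (((RatFunc.X : RatFunc L) ^ k) ^ (l' * n) • f v0)
          = (RatFunc.X : RatFunc L) ^ (e * n) • f v0 := by
        have hp1 : (((RatFunc.X : RatFunc L) ^ k')⁻¹) ^ (l * n)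
            = ((RatFunc.X : RatFunc L) ^ (k' * (l * n)))⁻¹ := by
          rw [inv_pow, ← pow_mul]
        have hp2 : ((RatFunc.X : RatFunc L) ^ k) ^ (l' * n)
            = (RatFunc.X : RatFunc L) ^ (k * (l' * n)) := by
          rw [← pow_mul]
        rw [hp1, hp2]
        apply Stmt11Aux.smul_cancel
        have hkl : k * l' = k' * l + e := by omega
        calc k * (l' * n) = (k * l') * n := by ring
          _ = (k' * l + e) * n := by rw [hkl]
          _ = k' * (l * n) + e * n := by ring
      rw [hscal] at h3
      exact ⟨_, memB _ h3, by rw [map_smul, smul_eq_mul]⟩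
  -- equal weights plus coprimality force r' = r
  have hdr : d * r' = d' * r := by
    have h1 := A.weight_rel
    have h2 := B.weight_rel
    have hll : 0 < l * l' := Nat.mul_pos A.pos_l B.pos_l
    refine Nat.eq_of_mul_eq_mul_left hll ?_
    calc l * l' * (d * r') = l' * (l * d) * r' := by ring
      _ = l' * (k * r) * r' := by rw [h1]
      _ = (k * l') * (r * r') := by ring
      _ = (k' * l) * (r * r') := by rw [hweight]
      _ = l * (k' * r') * r := by ring
      _ = l * (l' * d') * r := by rw [h2]
      _ = l * l' * (d' * r) := by ring
  haveI : Nontrivial V' := ⟨w0, 0, hw0⟩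
  have hr'pos : 0 < r' := by
    rw [← B.rank_eq]
    exact Module.finrank_pos
  have hler : r' ≤ r := by
    rw [← B.rank_eq, ← A.rank_eq, ← finrank_top (RatFunc L) V', ← hrange]
    exact f.finrank_range_le
  have hrdvd : r ∣ r' := by
    refine hcop.dvd_of_dvd_mul_right ?_
    exact ⟨d', by rw [mul_comm r' d, hdr, mul_comm d' r]⟩
  have hrr : r = r' := le_antisymm (Nat.le_of_dvd hr'pos hrdvd) hler
  -- surjective + equal finrank ⇒ injective
  have hrank := LinearMap.finrank_range_add_finrank_ker f
  rw [hrange, finrank_top, B.rank_eq, ← hrr, ← A.rank_eq] at hrank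
  have hker : Module.finrank (RatFunc L) (LinearMap.ker f) = 0 := by omega
  have hkerbot : LinearMap.ker f = ⊥ := Submodule.finrank_eq_zero.mp hker
  exact ⟨LinearMap.ker_eq_bot.mp hkerbot, hfsurj⟩
end

section
/- Let R be a commutative ring decomposed as a product R = ∏_{i∈Z/fZ} R_i with an endomorphism σ of R mapping R_{i} onto R_{i+1} (i.e. σ(a_{i-1}) = a_i for the corresponding ideals). Fix i. Then the category of pairs (N, φ) with N finite free over R and φ: σ*N ≅ N an isomorphism is equivalent to the category of pairs (N', ψ) with N' finite free over R_i and ψ: (σ^f)*N' ≅ N', via reduction N ↦ (N/a_i N, φ^f mod a_i). -/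
noncomputable section

/-- The matrix of `φ^f = φ ∘ σ*φ ∘ ... ∘ (σ*)^{f-1}φ` for a `σ`-shtuka with
matrix `C` (in coordinates): `C · σ(C) · ... · σ^{f-1}(C)`. -/
def twistProd {R : Type} [CommRing R] (σ : R → R) (f : ℕ) {m : ℕ}
    (C : Matrix (Fin m) (Fin m) R) : Matrix (Fin m) (Fin m) R :=
  ((List.range f).map fun j => C.map σ^[j]).prod

/-!
Since `R ≅ ∏ R/a i` and `σ` carries the factor at `i` to the factor at `i + 1`, the equation
`H * C = C' * σ(H)` read modulo `a (i + 1)` determines `H mod a (i + 1)` from `H mod a i`.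
Starting from `K` at `i₀` and going once around `ℤ/fℤ`, one returns to `i₀` after `f` steps
with `K` transported by `φ^f`; the compatibility of `K` with `φ^f` is exactly what makes this
consistent, so `H` exists and is unique. For essential surjectivity take `C ≡ D` modulo `a i₀`
and `C ≡ 1` modulo the other `a i`: then `σ^j(C) ≡ 1` modulo `a i₀` for `0 < j < f`, so the
reduction of `φ^f` is `D`.
-/

lemma Matrix.map_surjective {m n α β : Type*} {g : α → β} (hg : Function.Surjective g) :
    Function.Surjective fun M : Matrix m n α => M.map g :=
  fun M => ⟨M.map (Function.surjInv hg), by ext; simp [Function.surjInv_eq hg]⟩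

lemma IsUnit.det_map {n α β : Type*} [Fintype n] [DecidableEq n] [CommRing α] [CommRing β]
    {A : Matrix n n α} (hA : IsUnit A.det) (g : α →+* β) : IsUnit (A.map g).det := by
  simpa only [RingHom.map_det, RingHom.mapMatrix_apply] using hA.map g

lemma Matrix.eq_of_mul_eq_mul_of_isUnit_det {n m α : Type*} [Fintype n] [DecidableEq n]
    [CommRing α] {A : Matrix n n α} (hA : IsUnit A.det) {X Y : Matrix m n α}
    (h : X * A = Y * A) : X = Y :=
  letI := A.invertibleOfIsUnitDet hA
  Matrix.mul_left_injective_of_invertible A h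

section TwistProd

variable {R : Type} [CommRing R] (σ : R →+* R) {m : ℕ} (C : Matrix (Fin m) (Fin m) R)

@[simp]
lemma twistProd_zero : twistProd σ 0 C = 1 := rfl

lemma twistProd_succ' (j : ℕ) : twistProd σ (j + 1) C = twistProd σ j C * C.map σ^[j] := by
  simp [twistProd, List.range_succ]

@[simp]
lemma twistProd_one : twistProd σ 1 C = C := by
  simp [twistProd_succ']

lemma twistProd_succ (j : ℕ) : twistProd σ (j + 1) C = C * (twistProd σ j C).map σ := by
  induction j with
  | zero => simp
  | succ j ih =>
    conv_rhs => rw [twistProd_succ', Matrix.map_mul, Matrix.map_map, ← Function.iterate_succ']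
    rw [twistProd_succ', ih, Matrix.mul_assoc]

lemma isUnit_det_twistProd {C : Matrix (Fin m) (Fin m) R} (hC : IsUnit C.det) (j : ℕ) :
    IsUnit (twistProd σ j C).det := by
  induction j with
  | zero => simp
  | succ j ih =>
    rw [twistProd_succ, Matrix.det_mul, ← RingHom.mapMatrix_apply, ← RingHom.map_det]
    exact hC.mul (ih.map σ)

lemma mul_twistProd_eq_twistProd_mul {m' : ℕ} {C' : Matrix (Fin m') (Fin m') R}
    {G : ℕ → Matrix (Fin m') (Fin m) R} (hG : ∀ j, G (j + 1) * C = C' * (G j).map σ)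
    (j : ℕ) :
    G j * twistProd σ j C = twistProd σ j C' * (G 0).map σ^[j] := by
  induction j with
  | zero => simp
  | succ j ih =>
    rw [twistProd_succ, ← Matrix.mul_assoc, hG, Matrix.mul_assoc, ← Matrix.map_mul, ih,
      twistProd_succ, Matrix.map_mul, Matrix.map_map, ← Function.iterate_succ',
      Matrix.mul_assoc]

lemma map_twistProd_eq_of_map_iterate_eq_one {S : Type*} [CommRing S] (π : R →+* S) {f : ℕ}
    (hf : 0 < f) (h : ∀ j, 0 < j → j < f → (C.map σ^[j]).map π = 1) :
    (twistProd σ f C).map π = C.map π := by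
  obtain ⟨n, rfl⟩ : ∃ n, f = n + 1 := ⟨f - 1, by omega⟩
  induction n with
  | zero => simp
  | succ n ih =>
    rw [twistProd_succ', Matrix.map_mul, ih (by omega) fun j hj hjn => h j hj (by omega),
      h (n + 1) (by omega) (by omega), Matrix.mul_one]

end TwistProd

section Decomposition

variable {R : Type} [CommRing R] {ι : Type*} {a : ι → Ideal R}

lemma isUnit_of_forall_isUnit_quotientMk
    (hdecomp : Function.Bijective (RingHom.pi fun i => Ideal.Quotient.mk (a i))) {x : R}
    (hx : ∀ i, IsUnit (Ideal.Quotient.mk (a i) x)) : IsUnit x :=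
  (isUnit_map_iff (RingEquiv.ofBijective _ hdecomp) x).mp (Pi.isUnit_iff.mpr hx)

lemma Matrix.eq_of_forall_map_quotientMk_eq {m n : Type*}
    (hdecomp : Function.Injective (RingHom.pi fun i => Ideal.Quotient.mk (a i)))
    {X Y : Matrix m n R}
    (h : ∀ i, X.map (Ideal.Quotient.mk (a i)) = Y.map (Ideal.Quotient.mk (a i))) :
    X = Y :=
  Matrix.map_injective hdecomp <| Matrix.ext fun k l => funext fun i =>
    congrFun (congrFun (h i) k) l

lemma Matrix.exists_forall_map_quotientMk_eq {m n : Type*}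
    (hdecomp : Function.Surjective (RingHom.pi fun i => Ideal.Quotient.mk (a i)))
    (M : ∀ i, Matrix m n (R ⧸ a i)) :
    ∃ X : Matrix m n R, ∀ i, X.map (Ideal.Quotient.mk (a i)) = M i := by
  obtain ⟨X, hX⟩ := Matrix.map_surjective hdecomp (Matrix.of fun k l i => M i k l)
  exact ⟨X, fun i => Matrix.ext fun k l => congrFun (congrFun (congrFun hX k) l) i⟩

lemma Matrix.isUnit_det_of_forall_isUnit_det_map_quotientMk {n : Type*} [Fintype n] [DecidableEq n]
    (hdecomp : Function.Bijective (RingHom.pi fun i => Ideal.Quotient.mk (a i)))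
    {X : Matrix n n R} (h : ∀ i, IsUnit (X.map (Ideal.Quotient.mk (a i))).det) : IsUnit X.det :=
  isUnit_of_forall_isUnit_quotientMk hdecomp fun i => by
    simpa only [RingHom.map_det, RingHom.mapMatrix_apply] using h i

end Decomposition

section Shift

variable {R : Type} [CommRing R] {f : ℕ} {a : ZMod f → Ideal R} {σ : R →+* R}

lemma quotientMk_iterate_eq (hσ : ∀ i, Ideal.comap σ (a (i + 1)) = a i) {i : ZMod f} {x y : R}
    (h : Ideal.Quotient.mk (a i) x = Ideal.Quotient.mk (a i) y) (j : ℕ) :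
    Ideal.Quotient.mk (a (i + j)) (σ^[j] x) = Ideal.Quotient.mk (a (i + j)) (σ^[j] y) := by
  induction j with
  | zero => rwa [Nat.cast_zero, add_zero]
  | succ j ih =>
    rw [Ideal.Quotient.eq] at ih ⊢
    rw [Nat.cast_succ, ← add_assoc, Function.iterate_succ_apply', Function.iterate_succ_apply',
      ← map_sub, ← Ideal.mem_comap, hσ]
    exact ih

lemma Matrix.map_iterate_map_quotientMk_eq {p q : Type*}
    (hσ : ∀ i, Ideal.comap σ (a (i + 1)) = a i) {i : ZMod f} {X Y : Matrix p q R}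
    (h : X.map (Ideal.Quotient.mk (a i)) = Y.map (Ideal.Quotient.mk (a i))) (j : ℕ) :
    (X.map σ^[j]).map (Ideal.Quotient.mk (a (i + j)))
      = (Y.map σ^[j]).map (Ideal.Quotient.mk (a (i + j))) :=
  Matrix.ext fun k l => quotientMk_iterate_eq hσ (congrFun (congrFun h k) l) j

lemma Matrix.map_map_quotientMk_succ_eq {p q : Type*}
    (hσ : ∀ i, Ideal.comap σ (a (i + 1)) = a i) {i : ZMod f} {X Y : Matrix p q R}
    (h : X.map (Ideal.Quotient.mk (a i)) = Y.map (Ideal.Quotient.mk (a i))) :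
    (X.map σ).map (Ideal.Quotient.mk (a (i + 1)))
      = (Y.map σ).map (Ideal.Quotient.mk (a (i + 1))) := by
  have := Matrix.map_iterate_map_quotientMk_eq hσ h 1
  rwa [Nat.cast_one, Function.iterate_one] at this

end Shift

section Shtuka

variable {R : Type} [CommRing R] {f : ℕ} {a : ZMod f → Ideal R} {σ : R →+* R}
  {m m' : ℕ} {C : Matrix (Fin m) (Fin m) R} {C' : Matrix (Fin m') (Fin m') R}

lemma map_quotientMk_succ_eq_of_mul_eq (hσ : ∀ i, Ideal.comap σ (a (i + 1)) = a i)
    (hC : IsUnit C.det) {i : ZMod f} {X X' Y Y' : Matrix (Fin m') (Fin m) R}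
    (hX : X' * C = C' * X.map σ) (hY : Y' * C = C' * Y.map σ)
    (h : X.map (Ideal.Quotient.mk (a i)) = Y.map (Ideal.Quotient.mk (a i))) :
    X'.map (Ideal.Quotient.mk (a (i + 1))) = Y'.map (Ideal.Quotient.mk (a (i + 1))) := by
  refine Matrix.eq_of_mul_eq_mul_of_isUnit_det (A := C.map (Ideal.Quotient.mk (a (i + 1))))
    (hC.det_map _) ?_
  rw [← Matrix.map_mul, ← Matrix.map_mul, hX, hY, Matrix.map_mul, Matrix.map_mul,
    Matrix.map_map_quotientMk_succ_eq hσ h]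

lemma map_quotientMk_add_eq_of_mul_eq (hσ : ∀ i, Ideal.comap σ (a (i + 1)) = a i)
    (hC : IsUnit C.det) {G : ℕ → Matrix (Fin m') (Fin m) R}
    (hG : ∀ j, G (j + 1) * C = C' * (G j).map σ) {H : Matrix (Fin m') (Fin m) R}
    (hH : H * C = C' * H.map σ) {i₀ : ZMod f}
    (h : H.map (Ideal.Quotient.mk (a i₀)) = (G 0).map (Ideal.Quotient.mk (a i₀))) (j : ℕ) :
    H.map (Ideal.Quotient.mk (a (i₀ + j))) = (G j).map (Ideal.Quotient.mk (a (i₀ + j))) := by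
  induction j with
  | zero => rwa [Nat.cast_zero, add_zero]
  | succ j ih =>
    rw [Nat.cast_succ, ← add_assoc]
    exact map_quotientMk_succ_eq_of_mul_eq hσ hC hH (hG j) ih

lemma eq_of_mul_eq_of_map_quotientMk_eq [NeZero f]
    (hdecomp : Function.Injective (RingHom.pi fun i => Ideal.Quotient.mk (a i)))
    (hσ : ∀ i, Ideal.comap σ (a (i + 1)) = a i) (hC : IsUnit C.det)
    {H H' : Matrix (Fin m') (Fin m) R} (hH : H * C = C' * H.map σ)
    (hH' : H' * C = C' * H'.map σ) {i₀ : ZMod f}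
    (h : H.map (Ideal.Quotient.mk (a i₀)) = H'.map (Ideal.Quotient.mk (a i₀))) : H = H' := by
  refine Matrix.eq_of_forall_map_quotientMk_eq hdecomp fun i => ?_
  have := map_quotientMk_add_eq_of_mul_eq hσ hC (G := fun _ => H') (fun _ => hH') hH h
    (i - i₀).val
  rwa [ZMod.natCast_zmod_val, add_sub_cancel] at this

lemma exists_mul_eq_of_map_quotientMk_eq [NeZero f]
    (hdecomp : Function.Bijective (RingHom.pi fun i => Ideal.Quotient.mk (a i)))
    (hσ : ∀ i, Ideal.comap σ (a (i + 1)) = a i) {G : ℕ → Matrix (Fin m') (Fin m) R}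
    (hG : ∀ j, G (j + 1) * C = C' * (G j).map σ) {i₀ : ZMod f}
    (hper : (G f).map (Ideal.Quotient.mk (a i₀)) = (G 0).map (Ideal.Quotient.mk (a i₀))) :
    ∃ H : Matrix (Fin m') (Fin m) R, H * C = C' * H.map σ ∧
      H.map (Ideal.Quotient.mk (a i₀)) = (G 0).map (Ideal.Quotient.mk (a i₀)) := by
  obtain ⟨H, hH⟩ := Matrix.exists_forall_map_quotientMk_eq hdecomp.2
    fun i => (G (i - i₀).val).map (Ideal.Quotient.mk (a i))
  have hHG : ∀ n < f, H.map (Ideal.Quotient.mk (a (i₀ + n)))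
      = (G n).map (Ideal.Quotient.mk (a (i₀ + n))) := fun n hn => by
    rw [hH, add_sub_cancel_left, ZMod.val_natCast_of_lt hn]
  have hHG0 : H.map (Ideal.Quotient.mk (a i₀)) = (G 0).map (Ideal.Quotient.mk (a i₀)) := by
    have := hHG 0 (NeZero.pos f)
    rwa [Nat.cast_zero, add_zero] at this
  have hHG_succ : ∀ n < f, H.map (Ideal.Quotient.mk (a (i₀ + n + 1)))
      = (G (n + 1)).map (Ideal.Quotient.mk (a (i₀ + n + 1))) := by
    intro n hn
    rw [add_assoc, ← Nat.cast_succ]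
    rcases (Nat.succ_le_of_lt hn).lt_or_eq with hlt | rfl
    · exact hHG (n + 1) hlt
    · rw [ZMod.natCast_self, add_zero, hper, hHG0]
  refine ⟨H, Matrix.eq_of_forall_map_quotientMk_eq hdecomp.1 fun i => ?_, hHG0⟩
  obtain ⟨n, hn, rfl⟩ : ∃ n < f, i = i₀ + n + 1 :=
    ⟨(i - 1 - i₀).val, ZMod.val_lt _, by rw [ZMod.natCast_zmod_val]; ring⟩
  rw [Matrix.map_mul, Matrix.map_mul, hHG_succ n hn, ← Matrix.map_mul, hG,
    Matrix.map_mul, Matrix.map_map_quotientMk_succ_eq hσ (hHG n hn)]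

end Shtuka

section Equivalence

variable {R : Type} [CommRing R] {f : ℕ} {a : ZMod f → Ideal R} {σ : R →+* R}

lemma exists_isUnit_det_map_twistProd_eq (hf : 0 < f)
    (hdecomp : Function.Bijective (RingHom.pi fun i => Ideal.Quotient.mk (a i)))
    (hσ : ∀ i, Ideal.comap σ (a (i + 1)) = a i) (i₀ : ZMod f) {m : ℕ}
    {D : Matrix (Fin m) (Fin m) (R ⧸ a i₀)} (hD : IsUnit D.det) :
    ∃ C : Matrix (Fin m) (Fin m) R, IsUnit C.det ∧
      (twistProd σ f C).map (Ideal.Quotient.mk (a i₀)) = D := by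
  obtain ⟨C, hC⟩ := Matrix.exists_forall_map_quotientMk_eq hdecomp.2
    (Function.update (fun _ => 1) i₀ D)
  have hCi₀ : C.map (Ideal.Quotient.mk (a i₀)) = D := by simpa using hC i₀
  have hC_ne : ∀ i ≠ i₀, C.map (Ideal.Quotient.mk (a i))
      = (1 : Matrix (Fin m) (Fin m) R).map (Ideal.Quotient.mk (a i)) := fun i hi => by
    simpa [hi] using hC i
  refine ⟨C, Matrix.isUnit_det_of_forall_isUnit_det_map_quotientMk hdecomp fun i => ?_, ?_⟩
  · by_cases hi : i = i₀
    · subst hi; rwa [hCi₀]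
    · simp [hC_ne i hi]
  · rw [map_twistProd_eq_of_map_iterate_eq_one σ C _ hf fun j hj hjf => ?_, hCi₀]
    have hj₀ : i₀ - j ≠ i₀ := by
      rw [Ne, sub_eq_self, ZMod.natCast_eq_zero_iff]
      exact Nat.not_dvd_of_pos_of_lt hj hjf
    have := Matrix.map_iterate_map_quotientMk_eq hσ (hC_ne _ hj₀) j
    rw [sub_add_cancel] at this
    simp [this]

lemma existsUnique_mul_eq_map_quotientMk_eq [NeZero f]
    (hdecomp : Function.Bijective (RingHom.pi fun i => Ideal.Quotient.mk (a i)))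
    (hσ : ∀ i, Ideal.comap σ (a (i + 1)) = a i) {i₀ : ZMod f}
    {σf : R ⧸ a i₀ →+* R ⧸ a i₀}
    (hσf : ∀ x, σf (Ideal.Quotient.mk (a i₀) x) = Ideal.Quotient.mk (a i₀) (σ^[f] x))
    {m m' : ℕ} {C : Matrix (Fin m) (Fin m) R} {C' : Matrix (Fin m') (Fin m') R}
    (hC : IsUnit C.det) {K : Matrix (Fin m') (Fin m) (R ⧸ a i₀)}
    (hK : K * (twistProd σ f C).map (Ideal.Quotient.mk (a i₀))
      = (twistProd σ f C').map (Ideal.Quotient.mk (a i₀)) * K.map σf) :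
    ∃! H : Matrix (Fin m') (Fin m) R,
      H * C = C' * H.map σ ∧ H.map (Ideal.Quotient.mk (a i₀)) = K := by
  obtain ⟨K₀, rfl⟩ := Matrix.map_surjective Ideal.Quotient.mk_surjective K
  -- `G j` is what `H` has to be modulo `a (i₀ + j)`.
  set G : ℕ → Matrix (Fin m') (Fin m) R := fun j => (fun M => C' * M.map σ * C⁻¹)^[j] K₀
  have hG : ∀ j, G (j + 1) * C = C' * (G j).map σ := fun j => by
    simp only [G, Function.iterate_succ_apply']
    exact Matrix.nonsing_inv_mul_cancel_right _ _ hC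
  have hGf : (G f).map (Ideal.Quotient.mk (a i₀)) = K₀.map (Ideal.Quotient.mk (a i₀)) := by
    refine Matrix.eq_of_mul_eq_mul_of_isUnit_det
      ((isUnit_det_twistProd σ hC f).det_map (Ideal.Quotient.mk (a i₀))) ?_
    rw [← Matrix.map_mul, mul_twistProd_eq_twistProd_mul σ C hG, Matrix.map_mul, hK]
    congr 1
    ext k l
    simp [G, hσf]
  obtain ⟨H, hH, hHK⟩ := exists_mul_eq_of_map_quotientMk_eq hdecomp hσ hG hGf
  exact ⟨H, ⟨hH, hHK⟩, fun H' ⟨hH', hH'K⟩ =>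
    eq_of_mul_eq_of_map_quotientMk_eq hdecomp.1 hσ hC hH' hH (hH'K.trans hHK.symm)⟩

end Equivalence

/-- let `R = ∏_{i ∈ ℤ/fℤ} R_i` be a product decomposition of a
commutative ring (given by ideals `a i` with `R ≅ ∏ R/a i`) with an
endomorphism `σ` carrying the `i`-th factor onto the `(i+1)`-th
(`σ⁻¹(a_{i+1}) = a_i`).  Fix `i₀`.  Then reduction `(N,φ) ↦ (N/a_{i₀}N, φ^f)`
is an equivalence from pairs (finite free `R`-module, isomorphism `φ: σ*N ≅ N`)
— in coordinates: unit-determinant matrices over `R` — to pairs over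
`R_{i₀} = R/a_{i₀}` with `σ^f`-semilinear isomorphisms: it is essentially
surjective (up to isomorphism of shtukas) and fully faithful (morphisms
correspond uniquely). -/
theorem stmt16 {R : Type} [CommRing R] (f : ℕ) (hf : 0 < f)
    (a : ZMod f → Ideal R) (σ : R →+* R)
    (hdecomp : Function.Bijective
      (Pi.ringHom fun i : ZMod f => Ideal.Quotient.mk (a i)))
    (hσ : ∀ i : ZMod f, Ideal.comap σ (a (i + 1)) = a i)
    (i₀ : ZMod f)
    (σf : R ⧸ a i₀ →+* R ⧸ a i₀)
    (hσf : ∀ x : R, σf (Ideal.Quotient.mk (a i₀) x)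
      = Ideal.Quotient.mk (a i₀) ((⇑σ)^[f] x)) :
    -- essential surjectivity
    (∀ (m : ℕ) (D : Matrix (Fin m) (Fin m) (R ⧸ a i₀)), IsUnit D.det →
      ∃ C : Matrix (Fin m) (Fin m) R, IsUnit C.det ∧
        ∃ U : Matrix (Fin m) (Fin m) (R ⧸ a i₀), IsUnit U.det ∧
          U * D = (twistProd (⇑σ) f C).map (Ideal.Quotient.mk (a i₀)) * U.map (⇑σf)) ∧
    -- full faithfulness
    (∀ (m m' : ℕ) (C : Matrix (Fin m) (Fin m) R) (C' : Matrix (Fin m') (Fin m') R),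
      IsUnit C.det → IsUnit C'.det →
      ∀ K : Matrix (Fin m') (Fin m) (R ⧸ a i₀),
        K * (twistProd (⇑σ) f C).map (Ideal.Quotient.mk (a i₀))
          = (twistProd (⇑σ) f C').map (Ideal.Quotient.mk (a i₀)) * K.map (⇑σf) →
        ∃! H : Matrix (Fin m') (Fin m) R,
          H * C = C' * H.map (⇑σ) ∧ H.map (Ideal.Quotient.mk (a i₀)) = K) := by
  have : NeZero f := ⟨hf.ne'⟩
  refine ⟨fun m D hD => ?_, fun m m' C C' hC _ K hK =>
    existsUnique_mul_eq_map_quotientMk_eq hdecomp hσ hσf hC hK⟩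
  obtain ⟨C, hC, hCD⟩ := exists_isUnit_det_map_twistProd_eq hf hdecomp hσ i₀ hD
  refine ⟨C, hC, 1, by simp, ?_⟩
  rw [hCD, Matrix.map_one _ (map_zero σf) (map_one σf), Matrix.one_mul, Matrix.mul_one]
end
end

section
/- Being isogenous via a separable isogeny is an equivalence relation on pure A-motives over a finite field L. In particular, if f: M' → M is a separable isogeny of pure A-motives over a finite field, then there exists a separable isogeny g: M → M'. -/
open Polynomial

/-!
Let `f : M' → M` be a separable isogeny. Since `L` is finite, the cokernel `Q = M / f M'` is
finite, and by separability `τ` induces an injection of `Q`; so for a suitable `n` the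
coefficientwise Frobenius `σ` of `L[X]` satisfies `σⁿ = id` (making `π = τⁿ` an `L[X]`-linear
endomorphism of `M`) and `π ≡ id` on `Q`. Choose `t ∈ L[X]` with `σ t = t` and `1 - t`
killing `Q` (e.g. `t = 1 - Xᵏ (Xⁱ - Xʲ)` where `Xⁱ`, `Xʲ` act alike on `Q`); there are infinitely
many such `t`, so we may also avoid the finitely many roots of the reversed characteristic
polynomial of `π`, i.e. arrange `det (1 - t π) ≠ 0`. Then `h = 1 - t π` commutes with `τ`, has
image in `f M'` and factors as `h = f ∘ g`. The adjugate of `h` shows that `g` is injective with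
torsion cokernel, and `g (f y) = y - τ (t τⁿ⁻¹ y)` shows that `τ` induces a surjection, hence
(the cokernel being finite) a bijection, of the cokernel of `g`.
-/

theorem Function.Injective.iterate_eq_id_of_factorial_dvd {α : Type*} [Finite α] {f : α → α}
    (hf : Function.Injective f) {n : ℕ} (hn : (Nat.card α).factorial ∣ n) : f^[n] = id := by
  have := Fintype.ofFinite α
  obtain ⟨k, rfl⟩ := hn
  rw [Function.iterate_mul, Nat.card_eq_fintype_card,
    Function.injective_iff_iterate_factorial_card_eq_id.mp hf, Function.iterate_id]

theorem Polynomial.iterate_mapRingHom_eq_self {L : Type*} [Field L] [Finite L] (φ : L →+* L)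
    {n : ℕ} (hn : (Nat.card L).factorial ∣ n) (p : L[X]) : (mapRingHom φ)^[n] p = p := by
  ext i
  have hcoeff : Function.Semiconj (coeff · i) (mapRingHom φ) φ := fun p => coeff_map φ i
  exact (hcoeff.iterate_right n p).trans
    (congrFun (φ.injective.iterate_eq_id_of_factorial_dvd hn) _)

theorem Polynomial.finite_quotient_of_smul_mem {L M : Type*} [Field L] [Finite L] [AddCommGroup M]
    [Module L[X] M] [Module.Finite L[X] M] {N : Submodule L[X] M} {c : L[X]} (hc : c ≠ 0)
    (h : ∀ y, c • y ∈ N) : Finite (M ⧸ N) := by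
  let I := Ideal.span {c}
  have hI : Module.IsTorsionBySet L[X] (M ⧸ N) I := by
    refine (Module.isTorsionBySet_span_singleton_iff c).mpr fun q => ?_
    obtain ⟨y, rfl⟩ := N.mkQ_surjective q
    exact (Submodule.Quotient.mk_eq_zero N).mpr (h y)
  let := hI.module
  have : Module.Finite L (AdjoinRoot c) := .of_basis (AdjoinRoot.powerBasis hc).basis
  have : Finite (L[X] ⧸ I) := Module.finite_of_finite L (M := AdjoinRoot c)
  have : Module.Finite (L[X] ⧸ I) (M ⧸ N) := .of_restrictScalars_finite L[X] _ _
  exact Module.finite_of_finite (L[X] ⧸ I)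

theorem Polynomial.infinite_setOf_map_eq_self_and_one_sub_smul_eq_zero {R Q : Type*} [CommRing R]
    [IsDomain R] [AddCommGroup Q] [Module R[X] Q] [Finite Q] (φ : R →+* R) :
    {t : R[X] | t.map φ = t ∧ ∀ q : Q, (1 - t) • q = 0}.Infinite := by
  have hX : Function.Injective fun k : ℕ => (X : R[X]) ^ k := fun i j h => by
    simpa using congrArg natDegree h
  obtain ⟨i, j, hij, hXij⟩ :=
    Finite.exists_ne_map_eq_of_infinite fun k : ℕ => fun q : Q => (X : R[X]) ^ k • q
  have ha : (X : R[X]) ^ i - X ^ j ≠ 0 := sub_ne_zero.mpr (hX.ne hij)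
  refine Set.infinite_of_injective_forall_mem (f := fun k => 1 - X ^ k * (X ^ i - X ^ j))
    (fun k l hkl => hX (mul_right_cancel₀ ha (sub_right_injective hkl)))
    fun k => ⟨by simp, fun q => ?_⟩
  rw [sub_sub_cancel, mul_smul, sub_smul, congrFun hXij q, sub_self, smul_zero]

theorem Matrix.eval_charpolyRev_eq_det {R n : Type*} [CommRing R] [Fintype n] [DecidableEq n]
    (A : Matrix n n R) (t : R) : A.charpolyRev.eval t = (1 - t • A).det := by
  rw [charpolyRev, ← coe_evalRingHom, RingHom.map_det, map_sub, map_one]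
  congr 2
  ext i j
  simp only [smul_apply, RingHom.mapMatrix_apply, map_apply, coe_evalRingHom, smul_eq_mul,
    eval_mul, eval_X, eval_C]

theorem LinearMap.exists_det_one_sub_smul_ne_zero {R M : Type*} [CommRing R] [IsDomain R]
    [AddCommGroup M] [Module R M] [Module.Free R M] [Module.Finite R M] (u : Module.End R M)
    {S : Set R} (hS : S.Infinite) : ∃ t ∈ S, LinearMap.det (1 - t • u) ≠ 0 := by
  classical
  let b := Module.Free.chooseBasis R M
  let A := LinearMap.toMatrix b b u
  have hdet (t : R) : LinearMap.det (1 - t • u) = A.charpolyRev.eval t := by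
    rw [← LinearMap.det_toMatrix b, map_sub, map_smul, LinearMap.toMatrix_one,
      A.eval_charpolyRev_eq_det]
  have hA : A.charpolyRev ≠ 0 := fun h => by simpa [h] using A.eval_charpolyRev
  obtain ⟨t, htS, ht⟩ := (hS.sdiff (finite_setOfPred_isRoot hA)).nonempty
  exact ⟨t, htS, by rwa [hdet]⟩

theorem LinearMap.exists_mul_eq_det_smul_one {R M : Type*} [CommRing R] [AddCommGroup M]
    [Module R M] [Module.Free R M] [Module.Finite R M] (f : Module.End R M) :
    ∃ g : Module.End R M, f * g = LinearMap.det f • 1 ∧ g * f = LinearMap.det f • 1 := by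
  classical
  let b := Module.Free.chooseBasis R M
  let A := LinearMap.toMatrix b b f
  refine ⟨Matrix.toLin b b A.adjugate, ?_, ?_⟩ <;> apply (LinearMap.toMatrix b b).injective <;>
    simp only [LinearMap.toMatrix_mul, LinearMap.toMatrix_toLin, map_smul, LinearMap.toMatrix_one,
      ← LinearMap.det_toMatrix b, A, Matrix.mul_adjugate, Matrix.adjugate_mul,
      Matrix.smul_one_eq_diagonal]

theorem LinearMap.exists_comp_eq_of_range_le {R M₁ M₂ M₃ : Type*} [CommRing R] [AddCommGroup M₁]
    [Module R M₁] [AddCommGroup M₂] [Module R M₂] [AddCommGroup M₃] [Module R M₃]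
    {f : M₁ →ₗ[R] M₂} (hf : Function.Injective f) {h : M₃ →ₗ[R] M₂} (hh : range h ≤ range f) :
    ∃ g : M₃ →ₗ[R] M₁, f ∘ₗ g = h :=
  ⟨(LinearEquiv.ofInjective f hf).symm.toLinearMap ∘ₗ h.codRestrict _ fun x => hh ⟨x, rfl⟩,
    by ext x; simp⟩

namespace LinearMap

section Iterate

variable {R M : Type*} [Semiring R] [AddCommMonoid M] [Module R M] {σ : R →+* R}

theorem iterate_map_smul (τ : M →ₛₗ[σ] M) (n : ℕ) (p : R) (x : M) :
    τ^[n] (p • x) = σ^[n] p • τ^[n] x := by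
  induction n with
  | zero => rfl
  | succ n ih => simp only [Function.iterate_succ_apply', ih, map_smulₛₗ]

def linearIterate (τ : M →ₛₗ[σ] M) {n : ℕ} (hσ : ∀ p, σ^[n] p = p) : M →ₗ[R] M where
  toFun := τ^[n]
  map_add' := iterate_map_add τ n
  map_smul' p x := by rw [iterate_map_smul, hσ]; rfl

@[simp]
theorem linearIterate_apply (τ : M →ₛₗ[σ] M) {n : ℕ} (hσ : ∀ p, σ^[n] p = p) (x : M) :
    linearIterate τ hσ x = τ^[n] x := rfl

end Iterate

section Quotient

variable {R M : Type*} [Ring R] [AddCommGroup M] [Module R M] {σ : R →+* R} {N : Submodule R M}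

theorem iterate_sub_mem_of_factorial_dvd [Finite (M ⧸ N)] (τ : M →ₛₗ[σ] M)
    (hN : N ≤ N.comap τ) (hinj : ∀ x, τ x ∈ N → x ∈ N) {n : ℕ}
    (hn : (Nat.card (M ⧸ N)).factorial ∣ n) (x : M) : τ^[n] x - x ∈ N := by
  let τN := N.mapQ N τ hN
  have hsemiconj : Function.Semiconj N.mkQ τ τN := fun x => rfl
  have hτN : Function.Injective τN := by
    refine (injective_iff_map_eq_zero τN).mpr fun y hy => ?_
    obtain ⟨x, rfl⟩ := N.mkQ_surjective y
    exact (Submodule.Quotient.mk_eq_zero N).mpr (hinj x ((Submodule.Quotient.mk_eq_zero N).mp hy))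
  rw [← Submodule.Quotient.eq, ← N.mkQ_apply, ← N.mkQ_apply, hsemiconj.iterate_right,
    hτN.iterate_eq_id_of_factorial_dvd hn, id_eq]

theorem mem_of_map_mem_of_forall_sub_map_mem [Finite (M ⧸ N)] (τ : M →ₛₗ[σ] M)
    (hN : N ≤ N.comap τ) (hsurj : ∀ y, ∃ z, y - τ z ∈ N) {z : M} (hz : τ z ∈ N) : z ∈ N := by
  let τN := N.mapQ N τ hN
  have hτN : Function.Surjective τN := by
    intro y
    obtain ⟨y, rfl⟩ := N.mkQ_surjective y
    obtain ⟨z, hz⟩ := hsurj y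
    exact ⟨N.mkQ z, ((Submodule.Quotient.eq N).mpr hz).symm⟩
  have : τN (N.mkQ z) = τN 0 := by
    rw [map_zero]
    exact (Submodule.Quotient.mk_eq_zero N).mpr hz
  exact (Submodule.Quotient.mk_eq_zero N).mp (Finite.injective_iff_surjective.mpr hτN this)

end Quotient

end LinearMap

section

variable {R M₁ M₂ : Type*} [CommRing R] [AddCommGroup M₁] [Module R M₁] [AddCommGroup M₂]
  [Module R M₂] {σ : R →+* R}

theorem LinearMap.range_le_comap_range_of_semiconj {τ₁ : M₁ →ₛₗ[σ] M₁} {τ₂ : M₂ →ₛₗ[σ] M₂}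
    {f : M₁ →ₗ[R] M₂} (h : Function.Semiconj f τ₁ τ₂) :
    LinearMap.range f ≤ (LinearMap.range f).comap τ₂ := by
  rintro _ ⟨x, rfl⟩
  exact ⟨τ₁ x, h x⟩

/-- The last two fields say that `τ₂` induces a bijection of the cokernel of `f`. -/
structure IsSeparableIsogeny (τ₁ : M₁ →ₛₗ[σ] M₁) (τ₂ : M₂ →ₛₗ[σ] M₂) (f : M₁ →ₗ[R] M₂) :
    Prop where
  injective : Function.Injective f
  semiconj : Function.Semiconj f τ₁ τ₂
  exists_smul_mem_range : ∃ a : R, a ≠ 0 ∧ ∀ y, a • y ∈ LinearMap.range f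
  mem_range_of_map_mem_range : ∀ z, τ₂ z ∈ LinearMap.range f → z ∈ LinearMap.range f
  exists_sub_map_mem_range : ∀ y, ∃ z, y - τ₂ z ∈ LinearMap.range f

end

namespace IsSeparableIsogeny

variable {L : Type*} [Field L] [Finite L] {φ : L →+* L} {M₁ M₂ : Type*} [AddCommGroup M₁]
  [Module L[X] M₁] [AddCommGroup M₂] [Module L[X] M₂] [Module.Finite L[X] M₂]
  {τ₁ : M₁ →ₛₗ[mapRingHom φ] M₁} {τ₂ : M₂ →ₛₗ[mapRingHom φ] M₂} {f : M₁ →ₗ[L[X]] M₂}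

theorem finite_quotient_range (htors : ∃ a : L[X], a ≠ 0 ∧ ∀ y, a • y ∈ LinearMap.range f) :
    Finite (M₂ ⧸ LinearMap.range f) :=
  have ⟨_, ha, haf⟩ := htors
  finite_quotient_of_smul_mem ha haf

theorem of_exists_sub_map_mem_range (hinj : Function.Injective f)
    (hsemiconj : Function.Semiconj f τ₁ τ₂)
    (htors : ∃ a : L[X], a ≠ 0 ∧ ∀ y, a • y ∈ LinearMap.range f)
    (hsurj : ∀ y, ∃ z, y - τ₂ z ∈ LinearMap.range f) : IsSeparableIsogeny τ₁ τ₂ f :=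
  have := finite_quotient_range htors
  ⟨hinj, hsemiconj, htors, fun _ => τ₂.mem_of_map_mem_of_forall_sub_map_mem
    (LinearMap.range_le_comap_range_of_semiconj hsemiconj) hsurj, hsurj⟩

theorem exists_iterate_sub_mem_range (hf : IsSeparableIsogeny τ₁ τ₂ f) :
    ∃ n > 0, (∀ p, (mapRingHom φ)^[n] p = p) ∧ ∀ x, τ₂^[n] x - x ∈ LinearMap.range f := by
  have := finite_quotient_range hf.exists_smul_mem_range
  refine ⟨(Nat.card L).factorial * (Nat.card (M₂ ⧸ LinearMap.range f)).factorial,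
    by positivity, iterate_mapRingHom_eq_self φ (dvd_mul_right _ _),
    τ₂.iterate_sub_mem_of_factorial_dvd (LinearMap.range_le_comap_range_of_semiconj hf.semiconj)
      hf.mem_range_of_map_mem_range (dvd_mul_left _ _)⟩

variable [Module.Finite L[X] M₁]

theorem symm_of_comp_eq [Module.Free L[X] M₂] (hf : IsSeparableIsogeny τ₁ τ₂ f) {n : ℕ} (hn : 0 < n)
    (hσ : ∀ p, (mapRingHom φ)^[n] p = p) {t : L[X]} (ht : t.map φ = t) {g : M₂ →ₗ[L[X]] M₁}
    (hfg : f ∘ₗ g = 1 - t • τ₂.linearIterate hσ) (hdet : LinearMap.det (f ∘ₗ g) ≠ 0) :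
    IsSeparableIsogeny τ₂ τ₁ g := by
  have hfg_apply (x : M₂) : f (g x) = x - t • τ₂^[n] x := by
    simpa using LinearMap.congr_fun hfg x
  obtain ⟨v, hfgv, hvfg⟩ := (f ∘ₗ g).exists_mul_eq_det_smul_one
  refine of_exists_sub_map_mem_range ?_ ?_ ⟨_, hdet, fun y => ⟨v (f y), ?_⟩⟩ fun y => ?_
  · refine (injective_iff_map_eq_zero g).mpr fun x hx => ?_
    have hdet_smul : LinearMap.det (f ∘ₗ g) • x = v (f (g x)) := (LinearMap.congr_fun hvfg x).symm
    simpa [hx, hdet] using hdet_smul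
  · intro x
    apply hf.injective
    rw [hfg_apply, hf.semiconj, hfg_apply, map_sub, map_smulₛₗ, coe_mapRingHom, ht,
      Function.Commute.self_iterate τ₂ n x]
  · apply hf.injective
    rw [map_smul]
    exact LinearMap.congr_fun hfgv (f y)
  · obtain ⟨m, rfl⟩ := Nat.exists_eq_add_one_of_ne_zero hn.ne'
    refine ⟨t • τ₁^[m] y, f y, hf.injective ?_⟩
    rw [hfg_apply, map_sub, hf.semiconj, map_smul, hf.semiconj.iterate_right, map_smulₛₗ,
      coe_mapRingHom, ht, ← Function.iterate_succ_apply' τ₂]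

theorem exists_symm [Module.Projective L[X] M₂] (hf : IsSeparableIsogeny τ₁ τ₂ f) :
    ∃ g : M₂ →ₗ[L[X]] M₁, IsSeparableIsogeny τ₂ τ₁ g := by
  have := finite_quotient_range hf.exists_smul_mem_range
  obtain ⟨n, hn, hσ, hperiod⟩ := hf.exists_iterate_sub_mem_range
  let π := τ₂.linearIterate hσ
  obtain ⟨t, ⟨ht, htQ⟩, hdet⟩ := π.exists_det_one_sub_smul_ne_zero
    (infinite_setOf_map_eq_self_and_one_sub_smul_eq_zero φ (Q := M₂ ⧸ LinearMap.range f))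
  have hrange : LinearMap.range (1 - t • π) ≤ LinearMap.range f := by
    rintro _ ⟨x, rfl⟩
    have hx : (1 - t) • π x ∈ LinearMap.range f :=
      (Submodule.Quotient.mk_eq_zero _).mp (htQ (Submodule.Quotient.mk (π x)))
    have : (1 - t • π) x = (1 - t) • π x - (π x - x) := by
      simp only [LinearMap.sub_apply, Module.End.one_apply, LinearMap.smul_apply, sub_smul,
        one_smul]
      abel
    rw [this]
    exact sub_mem hx (hperiod x)
  obtain ⟨g, hfg⟩ := LinearMap.exists_comp_eq_of_range_le hf.injective hrange
  exact ⟨g, hf.symm_of_comp_eq hn hσ ht hfg (hfg ▸ hdet)⟩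

end IsSeparableIsogeny

theorem stmt17_general {L : Type} [Field L] [Finite L]
    (frob : L →+* L)
    {M M' : Type} [AddCommGroup M] [Module (Polynomial L) M]
    [AddCommGroup M'] [Module (Polynomial L) M']
    [Module.Finite (Polynomial L) M] [Module.Projective (Polynomial L) M]
    [Module.Finite (Polynomial L) M']
    (τ : M → M) (τ' : M' → M')
    (hτadd : ∀ x y, τ (x + y) = τ x + τ y)
    (hτsl : ∀ (p : Polynomial L) (x : M), τ (p • x) = (p.map frob) • τ x)
    (hτ'add : ∀ x y, τ' (x + y) = τ' x + τ' y)
    (hτ'sl : ∀ (p : Polynomial L) (y : M'), τ' (p • y) = (p.map frob) • τ' y)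
    -- the separable isogeny `f : M' → M`
    (f : M' →ₗ[Polynomial L] M) (hfinj : Function.Injective f)
    (hcompat : ∀ x : M', f (τ' x) = τ (f x))
    (htors : ∃ a : Polynomial L, a ≠ 0 ∧ ∀ y : M, a • y ∈ LinearMap.range f)
    (hsep_inj : ∀ z : M, τ z ∈ LinearMap.range f → z ∈ LinearMap.range f)
    (hsep_surj : ∀ y : M, ∃ z : M, y - τ z ∈ LinearMap.range f) :
    ∃ g : M →ₗ[Polynomial L] M',
      Function.Injective g ∧
      (∀ x : M, g (τ x) = τ' (g x)) ∧
      (∃ b : Polynomial L, b ≠ 0 ∧ ∀ y : M', b • y ∈ LinearMap.range g) ∧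
      (∀ z : M', τ' z ∈ LinearMap.range g → z ∈ LinearMap.range g) ∧
      (∀ y : M', ∃ z : M', y - τ' z ∈ LinearMap.range g) := by
  let T : M →ₛₗ[mapRingHom frob] M := ⟨⟨τ, hτadd⟩, hτsl⟩
  let T' : M' →ₛₗ[mapRingHom frob] M' := ⟨⟨τ', hτ'add⟩, hτ'sl⟩
  have hf : IsSeparableIsogeny T' T f := ⟨hfinj, hcompat, htors, hsep_inj, hsep_surj⟩
  obtain ⟨g, hg⟩ := hf.exists_symm
  exact ⟨g, hg.injective, hg.semiconj, hg.exists_smul_mem_range, hg.mem_range_of_map_mem_range,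
    hg.exists_sub_map_mem_range⟩

/-- over a finite field `L`, being isogenous via a separable
isogeny is an equivalence relation on (pure) `A`-motives (`A = F_q[t]`); the
essential content is symmetry: if `f : M' → M` is a separable isogeny (injective
`τ`-compatible with torsion cokernel on which the induced `τ` is an
isomorphism), then there exists a separable isogeny `g : M → M'`. -/
theorem stmt17 {q : ℕ} (hq : 1 < q) {L : Type} [Field L] [Finite L]
    (frob : L →+* L) (hfrob : ∀ x : L, frob x = x ^ q) (θ : L)
    {M M' : Type} [AddCommGroup M] [Module (Polynomial L) M]
    [AddCommGroup M'] [Module (Polynomial L) M']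
    [Module L M] [IsScalarTower L (Polynomial L) M]
    [Module L M'] [IsScalarTower L (Polynomial L) M']
    [Module.Finite (Polynomial L) M] [Module.Projective (Polynomial L) M]
    [Module.Finite (Polynomial L) M'] [Module.Projective (Polynomial L) M']
    (τ : M → M) (τ' : M' → M')
    (hτadd : ∀ x y, τ (x + y) = τ x + τ y)
    (hτsl : ∀ (p : Polynomial L) (x : M), τ (p • x) = (p.map frob) • τ x)
    (hτinj : Function.Injective τ)
    (hτ'add : ∀ x y, τ' (x + y) = τ' x + τ' y)
    (hτ'sl : ∀ (p : Polynomial L) (y : M'), τ' (p • y) = (p.map frob) • τ' y)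
    (hτ'inj : Function.Injective τ')
    -- characteristic and finiteness of the cokernels of `τ`, `τ'`
    [FiniteDimensional L (M ⧸ Submodule.span (Polynomial L) (Set.range τ))]
    [FiniteDimensional L (M' ⧸ Submodule.span (Polynomial L) (Set.range τ'))]
    (hJ : ∃ dM : ℕ, ∀ y : M, ((X - C θ) ^ dM : Polynomial L) • y ∈
      Submodule.span (Polynomial L) (Set.range τ))
    (hJ' : ∃ dM' : ℕ, ∀ y : M', ((X - C θ) ^ dM' : Polynomial L) • y ∈
      Submodule.span (Polynomial L) (Set.range τ'))
    -- the separable isogeny `f : M' → M`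
    (f : M' →ₗ[Polynomial L] M) (hfinj : Function.Injective f)
    (hcompat : ∀ x : M', f (τ' x) = τ (f x))
    (htors : ∃ a : Polynomial L, a ≠ 0 ∧ ∀ y : M, a • y ∈ LinearMap.range f)
    (hsep_inj : ∀ z : M, τ z ∈ LinearMap.range f → z ∈ LinearMap.range f)
    (hsep_surj : ∀ y : M, ∃ z : M, y - τ z ∈ LinearMap.range f) :
    ∃ g : M →ₗ[Polynomial L] M',
      Function.Injective g ∧
      (∀ x : M, g (τ x) = τ' (g x)) ∧
      (∃ b : Polynomial L, b ≠ 0 ∧ ∀ y : M', b • y ∈ LinearMap.range g) ∧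
      (∀ z : M', τ' z ∈ LinearMap.range g → z ∈ LinearMap.range g) ∧
      (∀ y : M', ∃ z : M', y - τ' z ∈ LinearMap.range g) :=
  stmt17_general frob τ τ' hτadd hτsl hτ'add hτ'sl f hfinj hcompat htors hsep_inj hsep_surj
end
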